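/- arXiv:0810.3322 — 6 statements merged into one kernel-verified Lean document; each statement's English description precedes it below -/
import Mathlib

section
/- In a Clifford graph algebra A_G, a monomial e_α is central if and only if for every vertex i of G, the number of edges connecting i to vertices in α is even. -/
open FreeAlgebra

inductive CliffordRel {V : Type} (G : SimpleGraph V) :
    FreeAlgebra ℂ V → FreeAlgebra ℂ V → Prop
  | sq (i : V) : CliffordRel G (ι ℂ i * ι ℂ i) (-1)
  | anticomm {i j : V} (h : G.Adj i j) :
      CliffordRel G (ι ℂ i * ι ℂ j) (-(ι ℂ j * ι ℂ i))
  | comm {i j : V} (hne : i ≠ j) (h : ¬ G.Adj i j) :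
      CliffordRel G (ι ℂ i * ι ℂ j) (ι ℂ j * ι ℂ i)

/-- The Clifford graph algebra of a simple graph. -/
abbrev GraphCliffordAlgebra {V : Type} (G : SimpleGraph V) :=
  RingQuot (CliffordRel G)

/-- The generator of the Clifford graph algebra corresponding to a vertex. -/
noncomputable def gen {V : Type} (G : SimpleGraph V) (i : V) :
    GraphCliffordAlgebra G :=
  RingQuot.mkAlgHom ℂ (CliffordRel G) (ι ℂ i)

/-- The monomial `e_α` : the ordered product of the generators in `α`. -/
noncomputable def mono {n : ℕ} (G : SimpleGraph (Fin n)) (α : Finset (Fin n)) :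
    GraphCliffordAlgebra G :=
  ((Finset.sort α (· ≤ ·)).map (gen G)).prod

namespace ProofAux
open scoped Classical

variable {n : ℕ}

lemma filter_symmDiff_not {P : Fin n → Prop} [DecidablePred P] {j : Fin n} (h : ¬ P j)
    (A : Finset (Fin n)) : (symmDiff A {j}).filter P = A.filter P := by
  ext x; simp [Finset.mem_symmDiff, Finset.mem_filter]; aesop

lemma filter_symmDiff_pos {P : Fin n → Prop} [DecidablePred P] {j : Fin n} (h : P j)
    (A : Finset (Fin n)) : (symmDiff A {j}).filter P = symmDiff (A.filter P) {j} := by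
  ext x; simp [Finset.mem_symmDiff, Finset.mem_filter]; aesop

noncomputable def sgn (G : SimpleGraph (Fin n)) (i : Fin n) (S : Finset (Fin n)) : ℂ :=
  (if i ∈ S then (-1:ℂ) else 1) * (-1)^((S.filter (fun j => G.Adj i j ∧ j < i)).card)

noncomputable def T (G : SimpleGraph (Fin n)) (i : Fin n) :
    (Finset (Fin n) →₀ ℂ) →ₗ[ℂ] (Finset (Fin n) →₀ ℂ) :=
  Finsupp.lsum ℂ (fun S => LinearMap.toSpanSingleton ℂ _
    (Finsupp.single (symmDiff S {i}) (sgn G i S)))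

lemma T_single (G : SimpleGraph (Fin n)) (i : Fin n) (S : Finset (Fin n)) (c : ℂ) :
    T G i (Finsupp.single S c) = Finsupp.single (symmDiff S {i}) (c * sgn G i S) := by
  simp [T, Finsupp.smul_single, LinearMap.toSpanSingleton_apply]

lemma neg_one_pow_symmDiff (A : Finset (Fin n)) (j : Fin n) :
    (-1:ℂ)^((symmDiff A {j}).card) = -(-1:ℂ)^A.card := by
  by_cases h : j ∈ A
  · have h1 : symmDiff A {j} = A.erase j := by
      ext x; simp [Finset.mem_symmDiff, Finset.mem_erase]; aesop
    have h2 : A.card = (A.erase j).card + 1 := by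
      rw [Finset.card_erase_of_mem h]
      have := Finset.card_pos.mpr ⟨j, h⟩
      omega
    rw [h1, h2, pow_succ]; ring
  · have h1 : symmDiff A {j} = insert j A := by
      ext x; simp [Finset.mem_symmDiff, Finset.mem_insert]; aesop
    rw [h1, Finset.card_insert_of_notMem h, pow_succ]; ring

lemma sgn_symmDiff_self (G : SimpleGraph (Fin n)) (i : Fin n) (S : Finset (Fin n)) :
    sgn G i (symmDiff S {i}) * sgn G i S = -1 := by
  have hP : ¬ (G.Adj i i ∧ i < i) := by simp
  have hf := filter_symmDiff_not (P := fun j => G.Adj i j ∧ j < i) hP S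
  have hm : (i ∈ symmDiff S {i}) ↔ ¬ i ∈ S := by
    simp [Finset.mem_symmDiff]
  unfold sgn
  rw [hf]
  by_cases h : i ∈ S <;>
    simp [h, hm, ← pow_add, ← two_mul, pow_mul]

lemma sgn_symmDiff_other (G : SimpleGraph (Fin n)) {i j : Fin n} (hij : i ≠ j)
    (S : Finset (Fin n)) :
    sgn G i (symmDiff S {j}) = (if G.Adj i j ∧ j < i then (-1:ℂ) else 1) * sgn G i S := by
  have hm : (i ∈ symmDiff S {j}) ↔ i ∈ S := by
    simp [Finset.mem_symmDiff]; aesop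
  by_cases hP : G.Adj i j ∧ j < i
  · have hf := filter_symmDiff_pos (P := fun k => G.Adj i k ∧ k < i) hP S
    unfold sgn
    rw [hf, neg_one_pow_symmDiff]
    simp only [hm, if_pos hP]
    ring
  · have hf := filter_symmDiff_not (P := fun k => G.Adj i k ∧ k < i) hP S
    unfold sgn
    rw [hf]
    simp only [hm, if_neg hP, one_mul]

lemma T_T_self (G : SimpleGraph (Fin n)) (i : Fin n) :
    T G i ∘ₗ T G i = -LinearMap.id := by
  apply Finsupp.lhom_ext
  intro S c
  simp only [LinearMap.comp_apply, T_single, LinearMap.neg_apply, LinearMap.id_apply]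
  rw [symmDiff_symmDiff_cancel_right]
  rw [mul_assoc, mul_comm (sgn G i S), sgn_symmDiff_self]
  simp [Finsupp.single_neg]

lemma T_T_comm (G : SimpleGraph (Fin n)) {i j : Fin n} (hij : i ≠ j) :
    T G i ∘ₗ T G j = (if G.Adj i j then (-1:ℂ) else 1) • (T G j ∘ₗ T G i) := by
  apply Finsupp.lhom_ext
  intro S c
  simp only [LinearMap.comp_apply, T_single, LinearMap.smul_apply, Finsupp.smul_single]
  rw [symmDiff_right_comm, sgn_symmDiff_other G hij, sgn_symmDiff_other G hij.symm]
  congr 1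
  have hadj : G.Adj j i ↔ G.Adj i j := ⟨fun h => h.symm, fun h => h.symm⟩
  by_cases h : G.Adj i j
  · rcases lt_or_gt_of_ne hij with h' | h' <;>
      · simp only [h, hadj, if_pos, true_and, h', asymm h', if_true, if_false, smul_eq_mul]
        ring
  · simp only [h, hadj, false_and, if_false, smul_eq_mul]
    ring

/-- The left regular representation of the Clifford graph algebra. -/
noncomputable def rep (G : SimpleGraph (Fin n)) :
    GraphCliffordAlgebra G →ₐ[ℂ] Module.End ℂ (Finset (Fin n) →₀ ℂ) :=
  RingQuot.liftAlgHom ℂ ⟨FreeAlgebra.lift ℂ (fun i => T G i), by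
    rintro a b hrel
    cases hrel with
    | sq i =>
      simp only [map_mul, map_neg, map_one, FreeAlgebra.lift_ι_apply]
      rw [Module.End.mul_eq_comp, T_T_self]
      rfl
    | @anticomm i j h =>
      have hne : i ≠ j := G.ne_of_adj h
      simp only [map_mul, map_neg, FreeAlgebra.lift_ι_apply]
      rw [Module.End.mul_eq_comp, Module.End.mul_eq_comp, T_T_comm G hne, if_pos h]
      exact neg_one_smul ℂ (T G j ∘ₗ T G i)
    | @comm i j hne h =>
      simp only [map_mul, FreeAlgebra.lift_ι_apply]
      rw [Module.End.mul_eq_comp, Module.End.mul_eq_comp, T_T_comm G hne, if_neg h, one_smul]⟩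

@[simp] lemma rep_gen (G : SimpleGraph (Fin n)) (i : Fin n) :
    rep G (gen G i) = T G i := by
  rw [rep, gen, RingQuot.liftAlgHom_mkAlgHom_apply, FreeAlgebra.lift_ι_apply]


lemma prod_T_apply_empty (G : SimpleGraph (Fin n)) (L : List (Fin n))
    (hs : L.Pairwise (· ≤ ·)) (hn : L.Nodup) :
    ((L.map (T G)).prod) (Finsupp.single ∅ (1:ℂ)) = Finsupp.single L.toFinset 1 := by
  induction L with
  | nil => simp [Module.End.one_apply]
  | cons a L ih =>
    have hs' : L.Pairwise (· ≤ ·) := hs.of_cons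
    have hn' : L.Nodup := hn.of_cons
    have ha : a ∉ L.toFinset := by
      simp only [List.mem_toFinset]
      exact (List.nodup_cons.mp hn).1
    have hle : ∀ b ∈ L, a ≤ b := fun b hb => (List.pairwise_cons.mp hs).1 b hb
    simp only [List.map_cons, List.prod_cons, Module.End.mul_apply, ih hs' hn']
    rw [T_single]
    have h1 : symmDiff L.toFinset {a} = insert a L.toFinset := by
      ext x; simp [Finset.mem_symmDiff, Finset.mem_insert]; aesop
    have h2 : sgn G a L.toFinset = 1 := by
      unfold sgn
      rw [if_neg ha]
      have : L.toFinset.filter (fun j => G.Adj a j ∧ j < a) = ∅ := by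
        apply Finset.filter_false_of_mem
        intro x hx
        simp only [List.mem_toFinset] at hx
        exact fun hc => absurd hc.2 (not_lt_of_ge (hle x hx))
      rw [this]
      simp
    rw [h1, h2, List.toFinset_cons, mul_one]

lemma mono_ne_zero (G : SimpleGraph (Fin n)) (α : Finset (Fin n)) : mono G α ≠ 0 := by
  intro h
  have h2 : rep G (mono G α) = 0 := by rw [h, map_zero]
  rw [mono, map_list_prod, List.map_map] at h2
  have h3 : (rep G) ∘ (gen G) = T G := by
    funext i; exact rep_gen G i
  rw [h3] at h2
  have h4 := prod_T_apply_empty G (Finset.sort α (· ≤ ·))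
    (Finset.pairwise_sort _ _) (Finset.sort_nodup _ _)
  rw [Finset.sort_toFinset] at h4
  rw [h2] at h4
  simp only [LinearMap.zero_apply] at h4
  exact one_ne_zero (Finsupp.single_eq_zero.mp h4.symm)

lemma gen_mul_self (G : SimpleGraph (Fin n)) (i : Fin n) :
    gen G i * gen G i = -1 := by
  have := RingQuot.mkAlgHom_rel ℂ (CliffordRel.sq (G := G) i)
  simpa only [gen, map_mul, map_neg, map_one] using this

lemma gen_mul_gen (G : SimpleGraph (Fin n)) (i j : Fin n) :
    gen G i * gen G j = (if G.Adj i j then (-1:ℂ) else 1) • (gen G j * gen G i) := by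
  by_cases h : G.Adj i j
  · have := RingQuot.mkAlgHom_rel ℂ (CliffordRel.anticomm (G := G) h)
    simp only [map_mul, map_neg] at this
    unfold gen
    rw [if_pos h, this]
    exact (neg_one_smul ℂ _).symm
  · by_cases hij : i = j
    · subst hij
      rw [if_neg h, one_smul]
    · have := RingQuot.mkAlgHom_rel ℂ (CliffordRel.comm (G := G) hij h)
      simp only [map_mul] at this
      unfold gen
      rw [if_neg h, this, one_smul]

lemma gen_mul_prod (G : SimpleGraph (Fin n)) (i : Fin n) (L : List (Fin n)) :
    gen G i * (L.map (gen G)).prod =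
      ((-1:ℂ)^(L.countP (fun j => decide (G.Adj i j)))) • ((L.map (gen G)).prod * gen G i) := by
  induction L with
  | nil => simp
  | cons a L ih =>
    simp only [List.map_cons, List.prod_cons, List.countP_cons]
    rw [← mul_assoc, gen_mul_gen G i a, smul_mul_assoc, mul_assoc, ih, mul_smul_comm,
      ← mul_assoc, smul_smul]
    by_cases h : G.Adj i a
    · simp only [h, if_pos, decide_eq_true_eq, if_true, pow_succ]
      ring_nf
    · simp only [h, decide_eq_true_eq, if_false, add_zero, one_mul]


lemma countP_sort (G : SimpleGraph (Fin n)) (i : Fin n) (α : Finset (Fin n)) :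
    (Finset.sort α (· ≤ ·)).countP (fun j => decide (G.Adj i j)) =
      (α.filter (fun j => G.Adj i j)).card := by
  have h1 : ((Finset.sort α (· ≤ ·)).filter (fun j => decide (G.Adj i j))).toFinset
      = α.filter (fun j => G.Adj i j) := by
    ext x
    simp [List.mem_filter, Finset.mem_filter]
  have h2 : ((Finset.sort α (· ≤ ·)).filter (fun j => decide (G.Adj i j))).Nodup :=
    (Finset.sort_nodup _ _).filter _
  rw [List.countP_eq_length_filter, ← h1, List.toFinset_card_of_nodup h2]

lemma adjoin_gen_top (G : SimpleGraph (Fin n)) :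
    Algebra.adjoin ℂ (Set.range (gen G)) = ⊤ := by
  have h1 : Set.range (gen G)
      = (RingQuot.mkAlgHom ℂ (CliffordRel G)) '' (Set.range (FreeAlgebra.ι ℂ)) := by
    rw [← Set.range_comp]; rfl
  rw [h1, ← AlgHom.map_adjoin, FreeAlgebra.adjoin_range_ι, Algebra.map_top]
  rw [AlgHom.range_eq_top]
  exact RingQuot.mkAlgHom_surjective ℂ _

end ProofAux

open scoped Classical in
/-- A monomial `e_α` is central in the Clifford graph algebra iff every vertex `i`
has an even number of edges connecting it to the set `α`. -/
theorem mono_central_iff_even_edges (n : ℕ) (G : SimpleGraph (Fin n)) (α : Finset (Fin n)) :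
    mono G α ∈ Subalgebra.center ℂ (GraphCliffordAlgebra G) ↔
      ∀ i : Fin n, Even (α.filter (fun j => G.Adj i j)).card := by
  have hkey : ∀ i : Fin n, gen G i * mono G α =
      ((-1:ℂ)^((α.filter (fun j => G.Adj i j)).card)) • (mono G α * gen G i) := by
    intro i
    have h := ProofAux.gen_mul_prod G i (Finset.sort α (· ≤ ·))
    rw [ProofAux.countP_sort] at h
    exact h
  constructor
  · intro hc i
    by_contra hodd
    rw [Nat.not_even_iff_odd] at hodd
    have hcomm := Subalgebra.mem_center_iff.mp hc (gen G i)
    have hk := hkey i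
    rw [hodd.neg_one_pow, hcomm] at hk
    have hk' : mono G α * gen G i = -(mono G α * gen G i) := by
      conv_lhs => rw [hk]
      exact neg_one_smul ℂ (mono G α * gen G i)
    have h2 : (mono G α * gen G i) + (mono G α * gen G i) = 0 := by
      nth_rewrite 1 [hk']
      exact neg_add_cancel _
    have h2' : (2:ℂ) • (mono G α * gen G i) = 0 := by
      rw [two_smul]; exact h2
    have h0 : mono G α * gen G i = 0 := by
      have := congrArg (fun z => (2:ℂ)⁻¹ • z) h2'
      simpa [smul_smul] using this
    have h3 : mono G α = 0 := by
      have h4 : mono G α * gen G i * gen G i = 0 := by rw [h0, zero_mul]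
      rw [mul_assoc, ProofAux.gen_mul_self] at h4
      have h5 : mono G α * (-1) = -(mono G α) := mul_neg_one (α := GraphCliffordAlgebra G) (mono G α)
      rw [h5] at h4
      exact neg_eq_zero.mp h4
    exact ProofAux.mono_ne_zero G α h3
  · intro h
    rw [Subalgebra.mem_center_iff]
    intro b
    have hgen : ∀ i, gen G i * mono G α = mono G α * gen G i := by
      intro i
      rw [hkey i, (h i).neg_one_pow, one_smul]
    have hb : b ∈ Subalgebra.centralizer ℂ ({mono G α} : Set _) := by
      have hle : Algebra.adjoin ℂ (Set.range (gen G)) ≤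
          Subalgebra.centralizer ℂ ({mono G α} : Set _) := by
        apply Algebra.adjoin_le
        rintro x ⟨i, rfl⟩
        show ∀ y ∈ ({mono G α} : Set _), y * gen G i = gen G i * y
        rintro y hy
        rw [Set.mem_singleton_iff] at hy
        subst hy
        exact (hgen i).symm
      apply hle
      rw [ProofAux.adjoin_gen_top G]
      exact Algebra.mem_top
    exact (hb (mono G α) rfl).symm
end

section
/- For a graph G on n vertices, the dimension of the center of its Clifford graph algebra A_G equals 2^d, where d is the dimension of the kernel (nullity) of the adjacency matrix of G considered as a matrix over the field 𝔽₂. -/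
open FreeAlgebra

open scoped Classical in
/-- The adjacency matrix of a graph over `𝔽₂`. -/
noncomputable def adjMat2 {n : ℕ} (G : SimpleGraph (Fin n)) : Matrix (Fin n) (Fin n) (ZMod 2) :=
  fun i j => if G.Adj i j then 1 else 0

namespace CGAProof

set_option synthInstance.maxHeartbeats 1000000
set_option maxHeartbeats 1000000

open scoped Classical

noncomputable section

variable {n : ℕ} (G : SimpleGraph (Fin n))

/-- sign function on `ZMod 2`. -/
def sgn (t : ZMod 2) : ℂ := if t = 0 then 1 else -1

lemma sgn_zero : sgn 0 = 1 := by simp [sgn]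

lemma sgn_one : sgn 1 = -1 := by norm_num [sgn]

lemma zmod2_cases (t : ZMod 2) : t = 0 ∨ t = 1 := by revert t; decide

lemma sgn_add (s t : ZMod 2) : sgn (s + t) = sgn s * sgn t := by
  rcases zmod2_cases s with rfl | rfl <;> rcases zmod2_cases t with rfl | rfl <;>
    norm_num [sgn] <;> rfl

lemma sgn_ne_zero (t : ZMod 2) : sgn t ≠ 0 := by
  rcases zmod2_cases t with rfl | rfl <;> norm_num [sgn_zero, sgn_one]

lemma sgn_inj {s t : ZMod 2} (h : sgn s = sgn t) : s = t := by
  rcases zmod2_cases s with rfl | rfl <;> rcases zmod2_cases t with rfl | rfl <;>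
    first | rfl | (exfalso; norm_num [sgn_zero, sgn_one] at h)

/-- the structure "cocycle exponent" on basis vectors. -/
def fB (i j : Fin n) : ZMod 2 :=
  (if i = j then 1 else 0) + (if j < i ∧ G.Adj i j then 1 else 0)

lemma fB_symm_sum (i j : Fin n) : fB G i j + fB G j i = adjMat2 G i j := by
  by_cases hij : i = j
  · subst hij
    have : ¬ G.Adj i i := SimpleGraph.irrefl G
    simp [fB, adjMat2, this]
    decide
  · have hadj : G.Adj j i ↔ G.Adj i j := G.adj_comm j i
    rcases lt_or_gt_of_ne hij with h | h
    · have h1 : ¬ j < i := not_lt_of_gt h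
      by_cases ha : G.Adj i j <;>
        simp [fB, adjMat2, hij, Ne.symm hij, h, h1, ha, hadj]
    · have h1 : ¬ i < j := not_lt_of_gt h
      by_cases ha : G.Adj i j <;>
        simp [fB, adjMat2, hij, Ne.symm hij, h, h1, ha, hadj]

/-- The bilinear cocycle exponent. -/
def Bf (a b : Fin n → ZMod 2) : ZMod 2 :=
  ∑ i, ∑ j, a i * b j * fB G i j

lemma Bf_add_left (a a' b : Fin n → ZMod 2) :
    Bf G (a + a') b = Bf G a b + Bf G a' b := by
  simp [Bf, add_mul, Finset.sum_add_distrib]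

lemma Bf_add_right (a b b' : Fin n → ZMod 2) :
    Bf G a (b + b') = Bf G a b + Bf G a b' := by
  simp [Bf, mul_add, add_mul, Finset.sum_add_distrib]

lemma Bf_single (i j : Fin n) :
    Bf G (Pi.single i 1) (Pi.single j 1) = fB G i j := by
  rw [Bf]
  rw [Finset.sum_eq_single i]
  · rw [Finset.sum_eq_single j] <;> simp +contextual [Pi.single_apply]
  · intro b _ hb
    apply Finset.sum_eq_zero
    intro c _
    simp [Pi.single_apply, hb]
  · simp

/-- The twisted group algebra model. -/
def BAlg (_G : SimpleGraph (Fin n)) : Type := (Fin n → ZMod 2) → ℂ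

instance : AddCommGroup (BAlg G) := Pi.addCommGroup

instance : Module ℂ (BAlg G) := Pi.module _ _ _

/-- multiplication in the model algebra. -/
def bmul (x y : BAlg G) : BAlg G :=
  fun c => ∑ a, sgn (Bf G a (a + c)) * x a * y (a + c)

/-- the unit of the model algebra. -/
def bone : BAlg G := fun c => if c = 0 then 1 else 0

instance : Mul (BAlg G) := ⟨bmul G⟩
instance : One (BAlg G) := ⟨bone G⟩

lemma bmul_apply (x y : BAlg G) (c : Fin n → ZMod 2) :
    (x * y) c = ∑ a, sgn (Bf G a (a + c)) * x a * y (a + c) := rfl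

lemma bone_apply (c : Fin n → ZMod 2) : (1 : BAlg G) c = if c = 0 then 1 else 0 := rfl

lemma vadd_self (a : Fin n → ZMod 2) : a + a = 0 := by
  funext i; exact CharTwo.add_self_eq_zero _

lemma Bf_zero_left (b : Fin n → ZMod 2) : Bf G 0 b = 0 := by simp [Bf]
lemma Bf_zero_right (b : Fin n → ZMod 2) : Bf G b 0 = 0 := by simp [Bf]

lemma bmul_assoc (x y z : BAlg G) : x * y * z = x * (y * z) := by
  funext d
  rw [bmul_apply, bmul_apply]
  simp only [bmul_apply, Finset.sum_mul, Finset.mul_sum]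
  rw [Finset.sum_comm]
  refine Finset.sum_congr rfl (fun b _ => ?_)
  refine (Fintype.sum_equiv (Equiv.addLeft b)
    (fun c => sgn (Bf G b (b + d)) * x b *
      (sgn (Bf G c (c + (b + d))) * y c * z (c + (b + d))))
    (fun a => sgn (Bf G a (a + d)) * (sgn (Bf G b (b + a)) * x b * y (b + a)) * z (a + d))
    (fun c => ?_)).symm
  simp only [Equiv.coe_addLeft]
  have h1 : b + (b + c) = c := by rw [← add_assoc, vadd_self, zero_add]
  have h2 : c + (b + d) = b + c + d := by abel
  rw [h1, h2]
  have S : sgn (Bf G b (b + d)) * sgn (Bf G c (b + c + d)) =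
      sgn (Bf G (b + c) (b + c + d)) * sgn (Bf G b c) := by
    rw [← sgn_add, ← sgn_add]
    apply congrArg
    simp only [Bf_add_left, Bf_add_right]
    generalize Bf G b b = t1
    generalize Bf G b c = t2
    generalize Bf G b d = t3
    generalize Bf G c b = t4
    generalize Bf G c c = t5
    generalize Bf G c d = t6
    revert t1 t2 t3 t4 t5 t6
    decide
  linear_combination (x b * y c * z (b + c + d)) * S


lemma bone_mul (x : BAlg G) : 1 * x = x := by
  funext c
  rw [bmul_apply, Finset.sum_eq_single (0 : Fin n → ZMod 2)]
  · simp [bone_apply, Bf_zero_left, sgn_zero]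
  · intro a _ ha
    simp [bone_apply, ha]
  · simp

lemma bmul_one (x : BAlg G) : x * 1 = x := by
  funext c
  rw [bmul_apply, Finset.sum_eq_single c]
  · simp [bone_apply, vadd_self, Bf_zero_right, sgn_zero]
  · intro a _ ha
    have : a + c ≠ 0 := by
      intro h
      apply ha
      have := congrArg (· + c) h
      simpa [add_assoc, vadd_self] using this
    simp [bone_apply, this]
  · simp

lemma badd_apply (x y : BAlg G) (c : Fin n → ZMod 2) : (x + y) c = x c + y c := rfl
lemma bzero_apply (c : Fin n → ZMod 2) : (0 : BAlg G) c = 0 := rfl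
lemma bsmul_apply (r : ℂ) (x : BAlg G) (c : Fin n → ZMod 2) : (r • x) c = r * x c := rfl

lemma bmul_add (x y z : BAlg G) : x * (y + z) = x * y + x * z := by
  funext c
  simp [bmul_apply, badd_apply, mul_add, Finset.sum_add_distrib]

lemma badd_mul (x y z : BAlg G) : (x + y) * z = x * z + y * z := by
  funext c
  simp [bmul_apply, badd_apply, mul_add, add_mul, Finset.sum_add_distrib]

lemma bzero_mul (x : BAlg G) : 0 * x = 0 := by
  funext c; simp [bmul_apply, bzero_apply]

lemma bmul_zero (x : BAlg G) : x * 0 = 0 := by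
  funext c; simp [bmul_apply, bzero_apply]

instance : Ring (BAlg G) :=
  { (inferInstance : AddCommGroup (BAlg G)) with
    mul := bmul G
    one := bone G
    mul_assoc := bmul_assoc G
    one_mul := bone_mul G
    mul_one := bmul_one G
    left_distrib := bmul_add G
    right_distrib := badd_mul G
    zero_mul := bzero_mul G
    mul_zero := bmul_zero G }

lemma bsmul_mul (r : ℂ) (x y : BAlg G) : (r • x) * y = r • (x * y) := by
  funext c
  rw [bsmul_apply, bmul_apply, bmul_apply, Finset.mul_sum]
  exact Finset.sum_congr rfl fun a _ => by rw [bsmul_apply]; ring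

lemma bmul_smul (r : ℂ) (x y : BAlg G) : x * (r • y) = r • (x * y) := by
  funext c
  rw [bsmul_apply, bmul_apply, bmul_apply, Finset.mul_sum]
  exact Finset.sum_congr rfl fun a _ => by rw [bsmul_apply]; ring

instance : Algebra ℂ (BAlg G) := Algebra.ofModule (bsmul_mul G) (bmul_smul G)

/-- basis delta functions of the model algebra -/
def bdelta (a : Fin n → ZMod 2) : BAlg G := fun c => if c = a then 1 else 0

lemma bdelta_apply (a c : Fin n → ZMod 2) : bdelta G a c = if c = a then 1 else 0 := rfl

lemma bdelta_mul (a b : Fin n → ZMod 2) :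
    (bdelta G a) * (bdelta G b) = sgn (Bf G a b) • bdelta G (a + b) := by
  funext c
  rw [bmul_apply, bsmul_apply, Finset.sum_eq_single a]
  · rw [bdelta_apply, bdelta_apply, bdelta_apply, if_pos rfl]
    by_cases h : c = a + b
    · have h2 : a + c = b := by rw [h, ← add_assoc, vadd_self, zero_add]
      have h3 : Bf G a (a + c) = Bf G a b := by rw [h2]
      rw [if_pos h2, if_pos h, h3]
      ring
    · have h2 : a + c ≠ b := by
        intro hb
        apply h
        rw [← hb, ← add_assoc, vadd_self, zero_add]
      rw [if_neg h2, if_neg h]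
      ring
  · intro x _ hx
    rw [bdelta_apply, if_neg hx]
    ring
  · simp

/-- indicator basis vector -/
def uvec (i : Fin n) : Fin n → ZMod 2 := Pi.single i 1

lemma bdelta_sq (i : Fin n) :
    bdelta G (uvec i) * bdelta G (uvec i) = -1 := by
  rw [bdelta_mul, uvec, Bf_single]
  have h1 : fB G i i = 1 := by simp [fB, SimpleGraph.irrefl]
  have h2 : (Pi.single i 1 : Fin n → ZMod 2) + Pi.single i 1 = 0 := vadd_self _
  rw [h1, h2, sgn_one]
  have : bdelta G (0 : Fin n → ZMod 2) = 1 := rfl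
  rw [this]
  simp

lemma bdelta_swap {i j : Fin n} (hij : i ≠ j) :
    bdelta G (uvec i) * bdelta G (uvec j) =
      (if G.Adj i j then (-1 : ℂ) else 1) • (bdelta G (uvec j) * bdelta G (uvec i)) := by
  simp only [bdelta_mul, uvec, Bf_single, smul_smul]
  have hcomm : (Pi.single j 1 : Fin n → ZMod 2) + Pi.single i 1 = Pi.single i 1 + Pi.single j 1 :=
    add_comm _ _
  rw [hcomm]
  congr 1
  have key : fB G i j = (if G.Adj i j then (1 : ZMod 2) else 0) + fB G j i := by
    have := fB_symm_sum G i j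
    have h2 : adjMat2 G i j = (if G.Adj i j then (1 : ZMod 2) else 0) := by
      simp [adjMat2]
    rw [h2] at this
    have : fB G i j + fB G j i + fB G j i =
        (if G.Adj i j then (1 : ZMod 2) else 0) + fB G j i := by rw [this]
    rwa [add_assoc, CharTwo.add_self_eq_zero, add_zero] at this
  rw [key, sgn_add]
  by_cases ha : G.Adj i j <;> simp [ha, sgn_zero, sgn_one]

/-- The algebra homomorphism from the free algebra. -/
def preφ : FreeAlgebra ℂ (Fin n) →ₐ[ℂ] BAlg G :=
  FreeAlgebra.lift ℂ (fun i => bdelta G (uvec i))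

lemma preφ_rel {x y : FreeAlgebra ℂ (Fin n)} (h : CliffordRel G x y) :
    preφ G x = preφ G y := by
  induction h with
  | sq i => simp [preφ, bdelta_sq]
  | @anticomm i j h =>
      have hij : i ≠ j := G.ne_of_adj h
      simp only [preφ, map_mul, map_neg, FreeAlgebra.lift_ι_apply]
      rw [bdelta_swap G hij, if_pos h]
      simp
  | @comm i j hne h =>
      simp only [preφ, map_mul, FreeAlgebra.lift_ι_apply]
      rw [bdelta_swap G hne, if_neg h]
      simp

/-- The main algebra homomorphism. -/
def φ : GraphCliffordAlgebra G →ₐ[ℂ] BAlg G :=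
  RingQuot.liftAlgHom ℂ ⟨preφ G, fun _ _ h => preφ_rel G h⟩

lemma φ_gen (i : Fin n) : φ G (gen G i) = bdelta G (uvec i) := by
  rw [gen, φ, RingQuot.liftAlgHom_mkAlgHom_apply]
  simp [preφ]

lemma gen_sq (i : Fin n) : gen G i * gen G i = (-1 : ℂ) • 1 := by
  have h0 : ((-1 : FreeAlgebra ℂ (Fin n))) = algebraMap ℂ _ (-1) := by simp
  have := RingQuot.mkAlgHom_rel ℂ (CliffordRel.sq (G := G) i)
  rw [map_mul, h0, AlgHom.commutes, Algebra.algebraMap_eq_smul_one] at this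
  exact this

lemma gen_swap {i j : Fin n} (hij : i ≠ j) :
    gen G i * gen G j = (if G.Adj i j then (-1 : ℂ) else 1) • (gen G j * gen G i) := by
  by_cases h : G.Adj i j
  · have := RingQuot.mkAlgHom_rel ℂ (CliffordRel.anticomm (G := G) h)
    simp only [map_mul, map_neg] at this
    rw [if_pos h]
    exact this.trans (neg_one_smul ℂ _).symm
  · have := RingQuot.mkAlgHom_rel ℂ (CliffordRel.comm (G := G) hij h)
    simp only [map_mul] at this
    rw [if_neg h, one_smul]
    exact this

/-- product of generators along a list -/
def monoL (L : List (Fin n)) : GraphCliffordAlgebra G := (L.map (gen G)).prod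

lemma monoL_nil : monoL G [] = 1 := rfl

lemma monoL_cons (j : Fin n) (L : List (Fin n)) :
    monoL G (j :: L) = gen G j * monoL G L := by simp [monoL]

lemma mono_eq_monoL (α : Finset (Fin n)) : mono G α = monoL G (α.sort (· ≤ ·)) := rfl

/-- Key reduction: multiplying a sorted monomial by a generator gives a scalar
multiple of a sorted monomial. -/
lemma gen_mul_monoL (i : Fin n) :
    ∀ L : List (Fin n), L.Pairwise (· < ·) →
      ∃ (c : ℂ) (M : List (Fin n)), M.Pairwise (· < ·) ∧ (∀ x ∈ M, x = i ∨ x ∈ L) ∧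
        gen G i * monoL G L = c • monoL G M := by
  intro L
  induction L with
  | nil =>
      intro _
      exact ⟨1, [i], List.pairwise_singleton _ i, by simp, by simp [monoL]⟩
  | cons j L' ih =>
      intro hs
      have hs' : L'.Pairwise (· < ·) := hs.of_cons
      have hjlt : ∀ x ∈ L', j < x := fun x hx => (List.pairwise_cons.mp hs).1 x hx
      rcases lt_trichotomy i j with h | h | h
      · refine ⟨1, i :: j :: L', ?_, ?_, by simp [monoL_cons]⟩
        · rw [List.pairwise_cons]
          exact ⟨fun x hx => by
            rcases List.mem_cons.mp hx with rfl | hx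
            · exact h
            · exact h.trans (hjlt x hx), hs⟩
        · intro x hx
          rcases List.mem_cons.mp hx with rfl | hx
          · exact Or.inl rfl
          · exact Or.inr hx
      · subst h
        refine ⟨-1, L', hs', fun x hx => Or.inr (List.mem_cons_of_mem _ hx), ?_⟩
        rw [monoL_cons, ← mul_assoc, gen_sq, smul_mul_assoc, one_mul]
      · rcases ih hs' with ⟨c, M, hM, hMmem, hmul⟩
        have hji : j ≠ i := ne_of_lt h
        refine ⟨(if G.Adj i j then (-1 : ℂ) else 1) * c, j :: M, ?_, ?_, ?_⟩
        · rw [List.pairwise_cons]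
          refine ⟨fun x hx => ?_, hM⟩
          rcases hMmem x hx with rfl | hx'
          · exact h
          · exact hjlt x hx'
        · intro x hx
          rcases List.mem_cons.mp hx with rfl | hx'
          · exact Or.inr List.mem_cons_self
          · rcases hMmem x hx' with rfl | h''
            · exact Or.inl rfl
            · exact Or.inr (List.mem_cons_of_mem _ h'')
        · rw [monoL_cons, ← mul_assoc, gen_swap G hji.symm, smul_mul_assoc, mul_assoc,
            hmul, monoL_cons, mul_smul_comm, smul_smul]

lemma monoL_sorted_eq_mono (M : List (Fin n)) (hM : M.Pairwise (· < ·)) :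
    monoL G M = mono G M.toFinset := by
  rw [mono_eq_monoL]
  congr 1
  symm
  rw [List.toFinset_sort]
  · exact hM.imp le_of_lt
  · exact hM.nodup

/-- span of the monomials -/
def Smod : Submodule ℂ (GraphCliffordAlgebra G) := Submodule.span ℂ (Set.range (mono G))

lemma mono_empty : mono G (∅ : Finset (Fin n)) = 1 := by
  rw [mono_eq_monoL, Finset.sort_empty]; rfl

lemma one_mem_Smod : (1 : GraphCliffordAlgebra G) ∈ Smod G :=
  mono_empty G ▸ Submodule.subset_span ⟨∅, rfl⟩

lemma gen_mul_mem_Smod (i : Fin n) {s : GraphCliffordAlgebra G} (hs : s ∈ Smod G) :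
    gen G i * s ∈ Smod G := by
  induction hs using Submodule.span_induction with
  | mem x hx =>
      obtain ⟨α, rfl⟩ := hx
      rw [mono_eq_monoL]
      obtain ⟨c, M, hM, _, hmul⟩ :=
        gen_mul_monoL G i (α.sort (· ≤ ·)) (Finset.sortedLT_sort α).pairwise
      rw [hmul, monoL_sorted_eq_mono G M hM]
      exact Submodule.smul_mem _ _ (Submodule.subset_span ⟨M.toFinset, rfl⟩)
  | zero => rw [mul_zero]; exact Submodule.zero_mem _
  | add x y _ _ hx hy => rw [mul_add]; exact Submodule.add_mem _ hx hy
  | smul r x _ hx => rw [mul_smul_comm]; exact Submodule.smul_mem _ _ hx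

lemma Smod_eq_top : Smod G = ⊤ := by
  rw [Submodule.eq_top_iff']
  intro x
  obtain ⟨y, rfl⟩ := RingQuot.mkAlgHom_surjective ℂ (CliffordRel G) x
  have key : ∀ y : FreeAlgebra ℂ (Fin n), ∀ s ∈ Smod G,
      RingQuot.mkAlgHom ℂ (CliffordRel G) y * s ∈ Smod G := by
    intro y
    induction y using FreeAlgebra.induction with
    | grade0 r =>
        intro s hs
        rw [AlgHom.commutes, ← Algebra.smul_def]
        exact Submodule.smul_mem _ _ hs
    | grade1 i =>
        intro s hs
        exact gen_mul_mem_Smod G i hs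
    | mul a b ha hb =>
        intro s hs
        rw [map_mul, mul_assoc]
        exact ha _ (hb s hs)
    | add a b ha hb =>
        intro s hs
        rw [map_add, add_mul]
        exact Submodule.add_mem _ (ha s hs) (hb s hs)
  simpa using key y 1 (one_mem_Smod G)

/-- indicator vector of a finset -/
def chi (α : Finset (Fin n)) : Fin n → ZMod 2 := fun j => if j ∈ α then 1 else 0

lemma chi_inj : Function.Injective (chi (n := n)) := by
  intro α β h
  ext j
  have := congrFun h j
  simp only [chi] at this
  by_cases h1 : j ∈ α <;> by_cases h2 : j ∈ β <;> simp_all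

lemma chi_surj (a : Fin n → ZMod 2) : chi (Finset.univ.filter fun j => a j = 1) = a := by
  funext j
  rcases zmod2_cases (a j) with h | h <;> simp [chi, h]

lemma bdelta_zero_eq_one : bdelta G (0 : Fin n → ZMod 2) = 1 := rfl

lemma φ_monoL (L : List (Fin n)) :
    ∃ c : ℂ, c ≠ 0 ∧ φ G (monoL G L) = c • bdelta G ((L.map (uvec (n := n))).sum) := by
  induction L with
  | nil =>
      refine ⟨1, one_ne_zero, ?_⟩
      rw [monoL_nil, map_one]
      simp [bdelta_zero_eq_one]
  | cons j L' ih =>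
      obtain ⟨c, hc, hφ⟩ := ih
      refine ⟨c * sgn (Bf G (uvec j) ((L'.map (uvec (n := n))).sum)), by
        exact mul_ne_zero hc (sgn_ne_zero _), ?_⟩
      rw [monoL_cons, map_mul, φ_gen, hφ, mul_smul_comm, bdelta_mul]
      rw [smul_smul, List.map_cons, List.sum_cons, mul_comm]

lemma sum_uvec_sorted (α : Finset (Fin n)) :
    ((α.sort (· ≤ ·)).map (uvec (n := n))).sum = chi α := by
  have h : ∀ L : List (Fin n), L.Nodup →
      (L.map (uvec (n := n))).sum = fun j => if j ∈ L then 1 else 0 := by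
    intro L
    induction L with
    | nil => intro _; funext j; simp
    | cons i L' ih =>
        intro hnd
        funext j
        rw [List.map_cons, List.sum_cons, Pi.add_apply, ih hnd.of_cons]
        by_cases hj : j = i
        · subst hj
          have : j ∉ L' := (List.nodup_cons.mp hnd).1
          simp [uvec, Pi.single_apply, this]
        · simp [uvec, Pi.single_apply, hj]
  rw [h _ (α.sort_nodup (· ≤ ·))]
  funext j
  simp [chi, Finset.mem_sort]

lemma φ_mono (α : Finset (Fin n)) :
    ∃ c : ℂ, c ≠ 0 ∧ φ G (mono G α) = c • bdelta G (chi α) := by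
  obtain ⟨c, hc, h⟩ := φ_monoL G (α.sort (· ≤ ·))
  exact ⟨c, hc, by rwa [sum_uvec_sorted] at h⟩

/-- the sign attached to a monomial under φ -/
def dcoef (α : Finset (Fin n)) : ℂ := (φ_mono G α).choose

lemma dcoef_ne_zero (α : Finset (Fin n)) : dcoef G α ≠ 0 := (φ_mono G α).choose_spec.1

lemma φ_mono_eq (α : Finset (Fin n)) :
    φ G (mono G α) = dcoef G α • bdelta G (chi α) := (φ_mono G α).choose_spec.2

lemma bdelta_chi_apply (α β : Finset (Fin n)) :
    bdelta G (chi α) (chi β) = if β = α then 1 else 0 := by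
  rw [bdelta_apply]
  by_cases h : β = α
  · simp [h]
  · have : chi β ≠ chi α := fun hc => h (chi_inj hc)
    simp [h, this]

lemma bsum_apply {ι : Type*} (s : Finset ι) (f : ι → BAlg G) (c : Fin n → ZMod 2) :
    (∑ i ∈ s, f i) c = ∑ i ∈ s, f i c := by
  classical
  induction s using Finset.induction with
  | empty => rfl
  | insert _ _ h ih => rw [Finset.sum_insert h, Finset.sum_insert h, badd_apply, ih]

lemma φ_injective : Function.Injective (φ G) := by
  rw [injective_iff_map_eq_zero]
  intro x hx
  have hxS : x ∈ Smod G := by rw [Smod_eq_top]; trivial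
  rw [Smod, Submodule.mem_span_range_iff_exists_fun] at hxS
  obtain ⟨c, hc⟩ := hxS
  have hzero : ∀ β : Finset (Fin n), c β = 0 := by
    intro β
    have h0 : φ G x (chi β) = 0 := by rw [hx]; rfl
    rw [← hc, map_sum] at h0
    have h1 : ∀ α : Finset (Fin n),
        (φ G (c α • mono G α)) (chi β) = c α * dcoef G α * (if β = α then 1 else 0) := by
      intro α
      rw [map_smul, φ_mono_eq, smul_smul, bsmul_apply, bdelta_chi_apply]
    rw [bsum_apply] at h0
    rw [Finset.sum_congr rfl (fun α _ => h1 α)] at h0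
    rw [Finset.sum_eq_single β (fun α _ hα => by rw [if_neg (Ne.symm hα), mul_zero])
      (fun h => absurd (Finset.mem_univ β) h)] at h0
    rw [if_pos rfl, mul_one] at h0
    exact (mul_eq_zero.mp h0).resolve_right (dcoef_ne_zero G β)
  rw [← hc]
  simp [hzero]

lemma φ_surjective : Function.Surjective (φ G) := by
  intro x
  have hx : x = ∑ a : Fin n → ZMod 2, x a • bdelta G a := by
    funext c
    rw [bsum_apply]
    rw [Finset.sum_congr rfl (fun a _ => by rw [bsmul_apply, bdelta_apply])]
    simp [Finset.sum_ite_eq' Finset.univ c]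
    exact ((Finset.sum_eq_single c (fun b _ hb => if_neg (Ne.symm hb))
      (fun h => absurd (Finset.mem_univ c) h)).trans (if_pos rfl)).symm
  have hb : ∀ a : Fin n → ZMod 2, ∃ y, φ G y = bdelta G a := by
    intro a
    set α := Finset.univ.filter fun j => a j = 1 with hα
    refine ⟨(dcoef G α)⁻¹ • mono G α, ?_⟩
    rw [map_smul, φ_mono_eq, smul_smul, inv_mul_cancel₀ (dcoef_ne_zero G α), one_smul, chi_surj]
  choose y hy using hb
  refine ⟨∑ a : Fin n → ZMod 2, x a • y a, ?_⟩
  rw [map_sum]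
  have hterm : ∀ a : Fin n → ZMod 2, φ G (x a • y a) = x a • bdelta G a := fun a => by
    rw [map_smul, hy a]
  rw [Finset.sum_congr rfl (fun a _ => hterm a)]
  exact hx.symm

/-- The isomorphism between the Clifford graph algebra and the model. -/
def φequiv : GraphCliffordAlgebra G ≃ₐ[ℂ] BAlg G :=
  AlgEquiv.ofBijective (φ G) ⟨φ_injective G, φ_surjective G⟩

lemma adjMat2_symm (p q : Fin n) : adjMat2 G p q = adjMat2 G q p := by
  by_cases h : G.Adj p q <;> simp [adjMat2, h, G.adj_comm p q] <;> simp_all [G.adj_comm p q]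

lemma Bf_add_swap (a c : Fin n → ZMod 2) :
    Bf G a c + Bf G c a = ∑ q, c q * ((adjMat2 G).mulVec a) q := by
  have h1 : Bf G c a = ∑ p, ∑ q, a p * c q * fB G q p := by
    rw [Bf, Finset.sum_comm]
    exact Finset.sum_congr rfl fun p _ => Finset.sum_congr rfl fun q _ => by ring
  rw [Bf, h1, ← Finset.sum_add_distrib]
  have h2 : ∀ p, (∑ q, a p * c q * fB G p q) + (∑ q, a p * c q * fB G q p)
      = ∑ q, c q * (adjMat2 G q p * a p) := by
    intro p
    rw [← Finset.sum_add_distrib]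
    refine Finset.sum_congr rfl fun q _ => ?_
    have := fB_symm_sum G p q
    calc a p * c q * fB G p q + a p * c q * fB G q p
        = a p * c q * (fB G p q + fB G q p) := by ring
      _ = a p * c q * adjMat2 G p q := by rw [this]
      _ = c q * (adjMat2 G q p * a p) := by rw [adjMat2_symm]; ring
  rw [Finset.sum_congr rfl fun p _ => h2 p, Finset.sum_comm]
  refine Finset.sum_congr rfl fun q _ => ?_
  rw [Matrix.mulVec, ← Finset.mul_sum]
  rfl

lemma Bf_symm_of_ker {a : Fin n → ZMod 2} (ha : (adjMat2 G).mulVec a = 0)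
    (c : Fin n → ZMod 2) : Bf G a c = Bf G c a := by
  have := Bf_add_swap G a c
  rw [ha] at this
  simp only [Pi.zero_apply, mul_zero, Finset.sum_const_zero] at this
  have h2 : Bf G a c + Bf G c a + Bf G c a = Bf G c a := by rw [this, zero_add]
  rwa [add_assoc, CharTwo.add_self_eq_zero, add_zero] at h2

lemma bdelta_mul_apply (b : Fin n → ZMod 2) (x : BAlg G) (c : Fin n → ZMod 2) :
    (bdelta G b * x) c = sgn (Bf G b (b + c)) * x (b + c) := by
  rw [bmul_apply, Finset.sum_eq_single b]
  · rw [bdelta_apply, if_pos rfl, mul_one]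
  · intro a _ ha
    rw [bdelta_apply, if_neg ha]; ring
  · simp

lemma mul_bdelta_apply (x : BAlg G) (b c : Fin n → ZMod 2) :
    (x * bdelta G b) c = sgn (Bf G (b + c) b) * x (b + c) := by
  rw [bmul_apply, Finset.sum_eq_single (b + c)]
  · have h : b + c + c = b := by rw [add_assoc, vadd_self, add_zero]
    rw [h, bdelta_apply, if_pos rfl]
    ring
  · intro a _ ha
    have : a + c ≠ b := fun hb => ha (by rw [← hb, add_assoc, vadd_self, add_zero])
    rw [bdelta_apply, if_neg this]; ring
  · simp

lemma central_support (x : BAlg G) (hx : x ∈ Subalgebra.center ℂ (BAlg G))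
    (c : Fin n → ZMod 2) (hc : x c ≠ 0) : Matrix.toLin' (adjMat2 G) c = 0 := by
  rw [Subalgebra.mem_center_iff] at hx
  have key : ∀ i : Fin n, Bf G (uvec i) c = Bf G c (uvec i) := by
    intro i
    have h := congrFun (hx (bdelta G (uvec i))).symm (uvec i + c)
    rw [bdelta_mul_apply, mul_bdelta_apply] at h
    have h1 : uvec i + (uvec i + c) = c := by rw [← add_assoc, vadd_self, zero_add]
    rw [h1] at h
    exact (sgn_inj (mul_right_cancel₀ hc h)).symm
  have hker : (adjMat2 G).mulVec c = 0 := by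
    funext i
    have := Bf_add_swap G c (uvec i)
    rw [(key i).symm] at this
    rw [CharTwo.add_self_eq_zero] at this
    have h2 : ∑ q, uvec i q * (adjMat2 G).mulVec c q = (adjMat2 G).mulVec c i := by
      rw [Finset.sum_eq_single i]
      · simp [uvec, Pi.single_apply]
      · intro q _ hq; simp [uvec, Pi.single_apply, hq]
      · simp
    rw [h2.symm, ← this]
    rfl
  rw [Matrix.toLin'_apply, hker]

lemma support_central (x : BAlg G)
    (hx : ∀ c : Fin n → ZMod 2, Matrix.toLin' (adjMat2 G) c ≠ 0 → x c = 0) :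
    x ∈ Subalgebra.center ℂ (BAlg G) := by
  rw [Subalgebra.mem_center_iff]
  intro y
  funext p
  rw [bmul_apply, bmul_apply]
  refine Fintype.sum_equiv (Equiv.addRight p)
    (fun a => sgn (Bf G a (a + p)) * y a * x (a + p))
    (fun a => sgn (Bf G a (a + p)) * x a * y (a + p)) (fun a => ?_)
  simp only [Equiv.coe_addRight]
  have h1 : a + p + p = a := by rw [add_assoc, vadd_self, add_zero]
  rw [h1]
  by_cases hxa : x (a + p) = 0
  · rw [hxa]; ring
  · have hker : (adjMat2 G).mulVec (a + p) = 0 := by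
      have h0 : Matrix.toLin' (adjMat2 G) (a + p) = 0 := by
        by_contra h
        exact hxa (hx _ h)
      rwa [Matrix.toLin'_apply] at h0
    have hsym : Bf G (a + p) a = Bf G a (a + p) := Bf_symm_of_ker G hker a
    rw [hsym]
    ring

/-- kernel of the adjacency matrix -/
def Kker : Submodule (ZMod 2) (Fin n → ZMod 2) := LinearMap.ker (Matrix.toLin' (adjMat2 G))

/-- the center of the model algebra is linearly equivalent to functions on the kernel -/
def centerBEquiv : ↥(Subalgebra.center ℂ (BAlg G)) ≃ₗ[ℂ] (↥(Kker G) → ℂ) where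
  toFun x := fun k => x.1 k.1
  map_add' x y := rfl
  map_smul' r x := rfl
  invFun g := ⟨fun c => if h : c ∈ Kker G then g ⟨c, h⟩ else 0, by
    apply support_central
    intro c hc
    rw [dif_neg (by simpa [Kker, LinearMap.mem_ker] using hc)]⟩
  left_inv x := by
    apply Subtype.ext
    funext c
    dsimp only
    by_cases h : c ∈ Kker G
    · rw [dif_pos h]
    · rw [dif_neg h]
      by_contra hne
      exact h (by
        simpa [Kker, LinearMap.mem_ker] using central_support G x.1 x.2 c (Ne.symm hne))
  right_inv g := by
    funext k
    dsimp only
    rw [dif_pos k.2]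

/-- transfer of centers along the isomorphism -/
def centerTransfer :
    ↥(Subalgebra.center ℂ (GraphCliffordAlgebra G)) ≃ₗ[ℂ] ↥(Subalgebra.center ℂ (BAlg G)) where
  toFun x := ⟨φequiv G x.1, by
    rw [Subalgebra.mem_center_iff]
    intro y
    obtain ⟨z, rfl⟩ := (φequiv G).surjective y
    rw [← map_mul, ← map_mul, Subalgebra.mem_center_iff.mp x.2 z]⟩
  map_add' x y := by apply Subtype.ext; simp
  map_smul' r x := by apply Subtype.ext; simp
  invFun y := ⟨(φequiv G).symm y.1, by
    rw [Subalgebra.mem_center_iff]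
    intro z
    have h := Subalgebra.mem_center_iff.mp y.2 (φequiv G z)
    apply (φequiv G).injective
    rw [map_mul, map_mul, AlgEquiv.apply_symm_apply, h]⟩
  left_inv x := by apply Subtype.ext; simp
  right_inv y := by apply Subtype.ext; simp

end

end CGAProof

set_option synthInstance.maxHeartbeats 1000000
set_option maxHeartbeats 1000000

/-- The dimension of the center of the Clifford graph algebra of `G` is `2 ^ d`, where `d`
is the dimension of the kernel of the adjacency matrix of `G` over `𝔽₂`. -/
theorem finrank_center_eq_two_pow_nullity (n : ℕ) (G : SimpleGraph (Fin n)) :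
    Module.finrank ℂ (Subalgebra.center ℂ (GraphCliffordAlgebra G)) =
      2 ^ Module.finrank (ZMod 2) (LinearMap.ker (Matrix.toLin' (adjMat2 G))) := by
  classical
  haveI : Fintype ↥(CGAProof.Kker G) := Fintype.ofFinite _
  rw [(CGAProof.centerTransfer G).finrank_eq, (CGAProof.centerBEquiv G).finrank_eq]
  rw [Module.finrank_fintype_fun_eq_card]
  have hcard : Fintype.card ↥(CGAProof.Kker G) =
      2 ^ Module.finrank (ZMod 2) ↥(CGAProof.Kker G) := by
    have := Module.card_eq_pow_finrank (K := ZMod 2) (V := ↥(CGAProof.Kker G))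
    rwa [ZMod.card] at this
  rw [hcard]
  rfl
end

section
/- A subset α of vertices of a graph G gives a central monomial e_α in the Clifford graph algebra A_G if and only if the indicator vector of α lies in the kernel of the adjacency matrix of G over 𝔽₂. -/
open FreeAlgebra

/-! ### Auxiliary material -/

variable {n : ℕ}

open FreeAlgebra Finset
variable {n : ℕ}
def flip' (i : Fin n) (S : Finset (Fin n)) : Finset (Fin n) :=
  if i ∈ S then S.erase i else insert i S
lemma flip'_flip' (i : Fin n) (S : Finset (Fin n)) : flip' i (flip' i S) = S := by
  by_cases h : i ∈ S <;> simp [flip', h, Finset.erase_insert, Finset.insert_erase]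
lemma flip'_comm {i j : Fin n} (hij : i ≠ j) (S : Finset (Fin n)) :
    flip' i (flip' j S) = flip' j (flip' i S) := by
  ext a
  by_cases hi : i ∈ S <;> by_cases hj : j ∈ S <;>
    simp [flip', hi, hj, hij, hij.symm, Finset.mem_erase, Finset.mem_insert] <;> aesop
lemma prod_flip' (i : Fin n) (S : Finset (Fin n)) (f : Fin n → ℂ) (hf : f i * f i = 1) :
    ∏ k ∈ flip' i S, f k = f i * ∏ k ∈ S, f k := by
  by_cases h : i ∈ S
  · rw [flip', if_pos h, ← Finset.mul_prod_erase S f h, ← mul_assoc, hf, one_mul]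
  · rw [flip', if_neg h, Finset.prod_insert h]

open scoped Classical in
noncomputable def sgn (G : SimpleGraph (Fin n)) (i : Fin n) (S : Finset (Fin n)) : ℂ :=
  Complex.I * ∏ k ∈ S, (if k < i ∧ G.Adj i k then (-1:ℂ) else 1)

lemma sgn_mul_self (G : SimpleGraph (Fin n)) (i : Fin n) (S : Finset (Fin n)) :
    sgn G i S * sgn G i S = -1 := by
  classical
  have h : (∏ k ∈ S, (if k < i ∧ G.Adj i k then (-1:ℂ) else 1)) *
      (∏ k ∈ S, (if k < i ∧ G.Adj i k then (-1:ℂ) else 1)) = 1 := by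
    rw [← Finset.prod_mul_distrib]
    apply Finset.prod_eq_one
    intro k _
    split <;> norm_num
  rw [sgn, mul_mul_mul_comm, Complex.I_mul_I, h, mul_one]

open scoped Classical in
lemma sgn_flip' (G : SimpleGraph (Fin n)) (i j : Fin n) (S : Finset (Fin n)) :
    sgn G j (flip' i S) = (if i < j ∧ G.Adj j i then (-1:ℂ) else 1) * sgn G j S := by
  classical
  rw [sgn, sgn, prod_flip']
  · ring
  · split <;> norm_num

lemma sgn_flip'_self (G : SimpleGraph (Fin n)) (i : Fin n) (S : Finset (Fin n)) :
    sgn G i (flip' i S) = sgn G i S := by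
  rw [sgn_flip', if_neg (by simp), one_mul]

noncomputable def Xmap (G : SimpleGraph (Fin n)) (i : Fin n) :
    Module.End ℂ (Finset (Fin n) → ℂ) where
  toFun f := fun S => sgn G i S * f (flip' i S)
  map_add' f g := by funext S; simp [mul_add]
  map_smul' c f := by funext S; simp [smul_eq_mul]; ring

lemma Xmap_apply (G : SimpleGraph (Fin n)) (i : Fin n) (f : Finset (Fin n) → ℂ)
    (S : Finset (Fin n)) : Xmap G i f S = sgn G i S * f (flip' i S) := rfl

lemma Xmap_sq (G : SimpleGraph (Fin n)) (i : Fin n) : Xmap G i * Xmap G i = -1 := by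
  apply LinearMap.ext; intro f; funext S
  simp only [Module.End.mul_apply, Xmap_apply, flip'_flip', sgn_flip'_self]
  rw [← mul_assoc, sgn_mul_self]
  simp

open scoped Classical in
lemma Xmap_mul (G : SimpleGraph (Fin n)) {i j : Fin n} (hij : i ≠ j) :
    Xmap G i * Xmap G j = (if G.Adj i j then (-1:ℂ) else 1) • (Xmap G j * Xmap G i) := by
  apply LinearMap.ext; intro f; funext S
  simp only [Module.End.mul_apply, Xmap_apply, LinearMap.smul_apply, Pi.smul_apply,
    smul_eq_mul]
  rw [flip'_comm hij.symm S, sgn_flip', sgn_flip' G j i]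
  have key : (if i < j ∧ G.Adj j i then (-1:ℂ) else 1) * sgn G j S * sgn G i S =
      (if G.Adj i j then (-1:ℂ) else 1) *
        ((if j < i ∧ G.Adj i j then (-1:ℂ) else 1) * sgn G i S * sgn G j S) := by
    rcases lt_or_gt_of_ne hij with h | h <;> by_cases ha : G.Adj i j <;>
      simp [h, h.asymm, ha, G.adj_comm j i, not_lt_of_gt h] <;> ring
  calc sgn G i S * ((if i < j ∧ G.Adj j i then (-1:ℂ) else 1) * sgn G j S *
        f (flip' i (flip' j S)))
      = ((if i < j ∧ G.Adj j i then (-1:ℂ) else 1) * sgn G j S * sgn G i S) *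
        f (flip' i (flip' j S)) := by ring
    _ = _ := by rw [key]; ring

lemma Xmap_anticomm (G : SimpleGraph (Fin n)) {i j : Fin n} (h : G.Adj i j) :
    Xmap G i * Xmap G j = -(Xmap G j * Xmap G i) := by
  classical
  rw [Xmap_mul G h.ne, if_pos h]
  exact neg_one_smul ℂ (Xmap G j * Xmap G i)

lemma Xmap_comm' (G : SimpleGraph (Fin n)) {i j : Fin n} (hij : i ≠ j) (h : ¬ G.Adj i j) :
    Xmap G i * Xmap G j = Xmap G j * Xmap G i := by
  classical
  rw [Xmap_mul G hij, if_neg h, one_smul]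

noncomputable def rep (G : SimpleGraph (Fin n)) :
    GraphCliffordAlgebra G →ₐ[ℂ] Module.End ℂ (Finset (Fin n) → ℂ) :=
  RingQuot.liftAlgHom ℂ ⟨FreeAlgebra.lift ℂ (Xmap G), by
    intro a b h
    induction h with
    | sq i => simp [map_mul, map_neg, map_one, FreeAlgebra.lift_ι_apply, Xmap_sq]
    | anticomm h => simp [map_mul, map_neg, FreeAlgebra.lift_ι_apply, Xmap_anticomm _ h]
    | comm hne h => simp [map_mul, FreeAlgebra.lift_ι_apply, Xmap_comm' _ hne h]⟩

lemma rep_gen (G : SimpleGraph (Fin n)) (i : Fin n) : rep G (gen G i) = Xmap G i := by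
  rw [gen, rep, RingQuot.liftAlgHom_mkAlgHom_apply, FreeAlgebra.lift_ι_apply]

lemma sgn_ne_zero (G : SimpleGraph (Fin n)) (i : Fin n) (S : Finset (Fin n)) :
    sgn G i S ≠ 0 := by
  intro h
  have := sgn_mul_self G i S
  rw [h, mul_zero] at this
  exact (by norm_num : (0:ℂ) ≠ -1) this

lemma prod_Xmap_ne (G : SimpleGraph (Fin n)) (L : List (Fin n)) (S : Finset (Fin n)) :
    ∃ (c : ℂ) (T : Finset (Fin n)), c ≠ 0 ∧
      ∀ f : Finset (Fin n) → ℂ, ((L.map (Xmap G)).prod) f S = c * f T := by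
  induction L generalizing S with
  | nil => exact ⟨1, S, one_ne_zero, fun f => by simp⟩
  | cons j L ih =>
    obtain ⟨c, T, hc, hf⟩ := ih (flip' j S)
    refine ⟨sgn G j S * c, T, mul_ne_zero (sgn_ne_zero G j S) hc, fun f => ?_⟩
    simp only [List.map_cons, List.prod_cons, Module.End.mul_apply, Xmap_apply, hf, mul_assoc]

open scoped Classical in
lemma gen_mul_gen (G : SimpleGraph (Fin n)) (i j : Fin n) :
    gen G i * gen G j = (if G.Adj i j then (-1:ℂ) else 1) • (gen G j * gen G i) := by
  by_cases h : G.Adj i j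
  · rw [if_pos h, show ((-1:ℂ) • (gen G j * gen G i)) = -(gen G j * gen G i) from neg_one_smul ℂ (gen G j * gen G i)]
    have := RingQuot.mkAlgHom_rel ℂ (CliffordRel.anticomm h)
    simpa only [map_mul, map_neg, gen] using this
  · rw [if_neg h, one_smul]
    rcases eq_or_ne i j with rfl | hne
    · rfl
    · have := RingQuot.mkAlgHom_rel ℂ (CliffordRel.comm hne h)
      simpa only [map_mul, gen] using this

open scoped Classical in
lemma gen_mul_list_prod (G : SimpleGraph (Fin n)) (i : Fin n) (L : List (Fin n)) :
    gen G i * (L.map (gen G)).prod =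
      (L.map (fun j => if G.Adj i j then (-1:ℂ) else 1)).prod •
        ((L.map (gen G)).prod * gen G i) := by
  induction L with
  | nil => simp
  | cons j L ih =>
    simp only [List.map_cons, List.prod_cons]
    rw [← mul_assoc, gen_mul_gen G i j, smul_mul_assoc, mul_assoc, ih, mul_smul_comm,
      smul_smul, mul_assoc]

lemma list_prod_sort (f : Fin n → ℂ) (α : Finset (Fin n)) :
    ((Finset.sort α (· ≤ ·)).map f).prod = ∏ j ∈ α, f j := by
  rw [Finset.prod_eq_multiset_prod, ← Finset.sort_eq (s := α) (r := (· ≤ ·))]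
  rfl

open scoped Classical in
lemma gen_mul_mono (G : SimpleGraph (Fin n)) (i : Fin n) (α : Finset (Fin n)) :
    gen G i * mono G α =
      ((-1:ℂ) ^ (α.filter (fun j => G.Adj i j)).card) • (mono G α * gen G i) := by
  rw [mono, gen_mul_list_prod, list_prod_sort]
  congr 1
  rw [Finset.prod_ite, Finset.prod_const, Finset.prod_const, one_pow, mul_one]

lemma central_of_comm (G : SimpleGraph (Fin n)) (x : GraphCliffordAlgebra G)
    (h : ∀ i, gen G i * x = x * gen G i) :
    x ∈ Subalgebra.center ℂ (GraphCliffordAlgebra G) := by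
  rw [Subalgebra.mem_center_iff]
  intro b
  obtain ⟨y, rfl⟩ := RingQuot.mkAlgHom_surjective ℂ (CliffordRel G) b
  induction y using FreeAlgebra.induction with
  | grade0 r => rw [AlgHom.commutes]; exact Algebra.commutes r x
  | grade1 i => exact h i
  | mul a b ha hb => rw [map_mul, mul_assoc, hb, ← mul_assoc, ha, mul_assoc]
  | add a b ha hb => rw [map_add, add_mul, mul_add, ha, hb]

open scoped Classical in
lemma mulVec_entry (G : SimpleGraph (Fin n)) (α : Finset (Fin n)) (i : Fin n) :
    (adjMat2 G).mulVec (fun j => if j ∈ α then 1 else 0) i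
      = ((α.filter (fun j => G.Adj i j)).card : ZMod 2) := by
  classical
  have : (adjMat2 G).mulVec (fun j => if j ∈ α then 1 else 0) i
      = ∑ j : Fin n, (if G.Adj i j ∧ j ∈ α then (1 : ZMod 2) else 0) := by
    simp only [Matrix.mulVec, dotProduct, adjMat2]
    refine Finset.sum_congr rfl fun j _ => ?_
    by_cases h1 : G.Adj i j <;> by_cases h2 : j ∈ α <;> simp [h1, h2]
  rw [this, Finset.sum_boole]
  congr 2
  ext j
  simp [and_comm]

lemma rep_mono_mul_gen (G : SimpleGraph (Fin n)) (α : Finset (Fin n)) (i : Fin n) :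
    rep G (mono G α * gen G i) =
      (((Finset.sort α (· ≤ ·) ++ [i]).map (Xmap G)).prod) := by
  rw [map_mul, rep_gen, mono, map_list_prod, List.map_map, List.map_append, List.prod_append]
  simp [Function.comp_def, rep_gen]

/-- `e_α` is central in the Clifford graph algebra iff the indicator vector of `α` lies in the
kernel of the adjacency matrix of `G` over `𝔽₂`. -/
theorem mono_central_iff_indicator_in_ker (n : ℕ) (G : SimpleGraph (Fin n))
    (α : Finset (Fin n)) :
    mono G α ∈ Subalgebra.center ℂ (GraphCliffordAlgebra G) ↔
      (adjMat2 G).mulVec (fun i => if i ∈ α then 1 else 0) = 0 := by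
  classical
  constructor
  · intro hc
    funext i
    rw [mulVec_entry, Pi.zero_apply, ZMod.natCast_eq_zero_iff]
    by_contra hk
    have hodd : Odd (α.filter (fun j => G.Adj i j)).card := Nat.odd_iff.mpr (by
      rcases Nat.even_or_odd (α.filter (fun j => G.Adj i j)).card with h | h
      · exact absurd h.two_dvd hk
      · exact Nat.odd_iff.mp h)
    have hcomm : gen G i * mono G α = mono G α * gen G i :=
      (Subalgebra.mem_center_iff.mp hc) (gen G i)
    have heq : mono G α * gen G i = (-1:ℂ) • (mono G α * gen G i) := by
      conv_lhs => rw [← hcomm]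
      rw [gen_mul_mono, hodd.neg_one_pow]
    have heq2 := congrArg (rep G) heq
    rw [map_smul, rep_mono_mul_gen] at heq2
    obtain ⟨c, T, hcne, hf⟩ := prod_Xmap_ne G (Finset.sort α (· ≤ ·) ++ [i]) ∅
    have := congrArg (fun u => u (fun _ => (1:ℂ)) ∅) heq2
    simp only [LinearMap.smul_apply, Pi.smul_apply, smul_eq_mul, hf] at this
    have hc0 : c = 0 := by linear_combination this / 2
    exact hcne hc0
  · intro h0
    apply central_of_comm
    intro i
    have hk : ((α.filter (fun j => G.Adj i j)).card : ZMod 2) = 0 := by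
      rw [← mulVec_entry G α i, h0, Pi.zero_apply]
    have heven : Even (α.filter (fun j => G.Adj i j)).card := by
      obtain ⟨m, hm⟩ := (ZMod.natCast_eq_zero_iff _ 2).mp hk
      exact ⟨m, by omega⟩
    rw [gen_mul_mono, heven.neg_one_pow, one_smul]
end

section
/- The Clifford graph algebra of the complete graph K_n is isomorphic as a ℂ-algebra to the Clifford graph algebra of the path graph P_n, via the map sending the path generators e'_1 ↦ e_1 and e'_i ↦ e_{i-1} e_i for i ≥ 2. -/
open FreeAlgebra

/-- The path graph on `Fin n`: `i` and `j` are adjacent iff `|i - j| = 1`. -/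
def pathG (n : ℕ) : SimpleGraph (Fin n) :=
  SimpleGraph.fromRel (fun i j => (i : ℕ) + 1 = (j : ℕ))

namespace PathIsoAux

variable {n : ℕ}

section RingHelpers
variable {A : Type*} [Ring A] {a b c d : A}

lemma flip_anti (h : a * b = -(b * a)) : b * a = -(a * b) := by rw [h, neg_neg]

lemma pair_sq (ha : a * a = -1) (hb : b * b = -1) (hab : a * b = -(b * a)) :
    (a * b) * (a * b) = -1 := by
  have h1 : b * a = -(a * b) := flip_anti hab
  calc (a * b) * (a * b) = a * (b * a) * b := by noncomm_ring
    _ = a * (-(a * b)) * b := by rw [h1]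
    _ = -((a * a) * (b * b)) := by noncomm_ring
    _ = -1 := by rw [ha, hb]; noncomm_ring

lemma adj0 (ha : a * a = -1) (hab : a * b = -(b * a)) :
    a * (a * b) = -((a * b) * a) := by
  have h1 : b * a = -(a * b) := flip_anti hab
  have lhs : a * (a * b) = -b := by
    calc a * (a * b) = (a * a) * b := by noncomm_ring
      _ = -b := by rw [ha]; noncomm_ring
  have rhs : (a * b) * a = b := by
    calc (a * b) * a = a * (b * a) := by noncomm_ring
      _ = a * (-(a * b)) := by rw [h1]
      _ = -((a * a) * b) := by noncomm_ring
      _ = b := by rw [ha]; noncomm_ring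
  rw [lhs, rhs]

lemma pair_adj (hb : b * b = -1) (hab : a * b = -(b * a)) (hbc : b * c = -(c * b))
    (hac : a * c = -(c * a)) : (a * b) * (b * c) = -((b * c) * (a * b)) := by
  have hba : b * a = -(a * b) := flip_anti hab
  have hcb : c * b = -(b * c) := flip_anti hbc
  have hca : c * a = -(a * c) := flip_anti hac
  have lhs : (a * b) * (b * c) = -(a * c) := by
    calc (a * b) * (b * c) = a * (b * b) * c := by noncomm_ring
      _ = -(a * c) := by rw [hb]; noncomm_ring
  have rhs : (b * c) * (a * b) = a * c := by
    calc (b * c) * (a * b) = b * ((c * a) * b) := by noncomm_ring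
      _ = b * ((-(a * c)) * b) := by rw [hca]
      _ = -((b * a) * (c * b)) := by noncomm_ring
      _ = -((-(a * b)) * (-(b * c))) := by rw [hba, hcb]
      _ = -(a * (b * b) * c) := by noncomm_ring
      _ = a * c := by rw [hb]; noncomm_ring
  rw [lhs, rhs]

lemma comm_single (hab : a * b = -(b * a)) (hac : a * c = -(c * a)) :
    a * (b * c) = (b * c) * a := by
  calc a * (b * c) = (a * b) * c := by noncomm_ring
    _ = (-(b * a)) * c := by rw [hab]
    _ = -(b * (a * c)) := by noncomm_ring
    _ = -(b * (-(c * a))) := by rw [hac]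
    _ = (b * c) * a := by noncomm_ring

lemma comm_pairs (hac : a * c = -(c * a)) (had : a * d = -(d * a))
    (hbc : b * c = -(c * b)) (hbd : b * d = -(d * b)) :
    (a * b) * (c * d) = (c * d) * (a * b) := by
  have h1 : a * (c * d) = (c * d) * a := comm_single hac had
  have h2 : b * (c * d) = (c * d) * b := comm_single hbc hbd
  calc (a * b) * (c * d) = a * (b * (c * d)) := by noncomm_ring
    _ = a * ((c * d) * b) := by rw [h2]
    _ = (a * (c * d)) * b := by noncomm_ring
    _ = ((c * d) * a) * b := by rw [h1]
    _ = (c * d) * (a * b) := by noncomm_ring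

lemma sq_telescope (ha : a * a = -1) : a * (a * b) = -b := by
  calc a * (a * b) = (a * a) * b := by noncomm_ring
    _ = -b := by rw [ha]; noncomm_ring

-- `x * (p * y) = (x * p) * y` with `p` moved: various regroupings, stated generically.
lemma regroup1 (h : b * a = -(a * b)) : (a * b) * (b * c) = a * ((b * b) * c) := by
  noncomm_ring

lemma move_left (h : c * a = a * c) : a * (b * c) = ((a * b) * c) := by noncomm_ring

lemma assoc4 : (a * b) * c = a * (b * c) := mul_assoc a b c

lemma anti_step1 (hcomm : c * a = a * c) (hanti : a * b = -(b * a)) :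
    a * (b * c) = -(b * (a * c)) := by
  calc a * (b * c) = (a * b) * c := by noncomm_ring
    _ = (-(b * a)) * c := by rw [hanti]
    _ = -(b * (a * c)) := by noncomm_ring

lemma anti_base (hsq : a * a = -1) (hanti : b * a = -(a * b)) :
    a * (a * b) = -((a * b) * a) := by
  have lhs : a * (a * b) = -b := sq_telescope hsq
  have rhs : (a * b) * a = b := by
    calc (a * b) * a = a * (b * a) := by noncomm_ring
      _ = a * (-(a * b)) := by rw [hanti]
      _ = -((a * a) * b) := by noncomm_ring
      _ = b := by rw [hsq]; noncomm_ring
  rw [lhs, rhs]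

end RingHelpers

lemma gen_sq {V : Type} (G : SimpleGraph V) (i : V) : gen G i * gen G i = -1 := by
  have h := RingQuot.mkAlgHom_rel ℂ (CliffordRel.sq (G := G) i)
  simpa [gen] using h

lemma gen_anticomm {V : Type} (G : SimpleGraph V) {i j : V} (h : G.Adj i j) :
    gen G i * gen G j = -(gen G j * gen G i) := by
  have h' := RingQuot.mkAlgHom_rel ℂ (CliffordRel.anticomm (G := G) h)
  simpa [gen] using h'

lemma gen_comm {V : Type} (G : SimpleGraph V) {i j : V} (hne : i ≠ j) (h : ¬ G.Adj i j) :
    gen G i * gen G j = gen G j * gen G i := by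
  have h' := RingQuot.mkAlgHom_rel ℂ (CliffordRel.comm (G := G) hne h)
  simpa [gen] using h'

lemma pathG_adj {i j : Fin n} :
    (pathG n).Adj i j ↔ i ≠ j ∧ ((i : ℕ) + 1 = j ∨ (j : ℕ) + 1 = i) := by
  simp [pathG, SimpleGraph.fromRel_adj]

lemma E_anticomm {i j : Fin n} (h : i ≠ j) :
    gen (⊤ : SimpleGraph (Fin n)) i * gen (⊤ : SimpleGraph (Fin n)) j =
      -(gen (⊤ : SimpleGraph (Fin n)) j * gen (⊤ : SimpleGraph (Fin n)) i) :=
  gen_anticomm _ (by simpa using h)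

lemma F_anticomm {i j : Fin n} (h : (i : ℕ) + 1 = j) :
    gen (pathG n) i * gen (pathG n) j = -(gen (pathG n) j * gen (pathG n) i) := by
  apply gen_anticomm
  rw [pathG_adj]
  exact ⟨Fin.ne_of_val_ne (by omega), Or.inl h⟩

lemma F_comm {i j : Fin n} (hne : i ≠ j) (h1 : (i : ℕ) + 1 ≠ j) (h2 : (j : ℕ) + 1 ≠ i) :
    gen (pathG n) i * gen (pathG n) j = gen (pathG n) j * gen (pathG n) i :=
  gen_comm _ hne (by rw [pathG_adj]; tauto)

/-- Padded family of path-graph generators, indexed by `ℕ`. -/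
noncomputable def FF (n : ℕ) (m : ℕ) : GraphCliffordAlgebra (pathG n) :=
  if h : m < n then gen (pathG n) ⟨m, h⟩ else 1

/-- Ordered product of path-graph generators `0, 1, ..., k`. -/
noncomputable def PP (n : ℕ) : ℕ → GraphCliffordAlgebra (pathG n)
  | 0 => FF n 0
  | (k + 1) => PP n k * FF n (k + 1)

lemma FF_eq (m : ℕ) (h : m < n) : FF n m = gen (pathG n) ⟨m, h⟩ := dif_pos h

lemma PP_zero : PP n 0 = FF n 0 := rfl

lemma PP_succ (k : ℕ) : PP n (k + 1) = PP n k * FF n (k + 1) := rfl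

lemma FF_sq {m : ℕ} (h : m < n) : FF n m * FF n m = -1 := by
  rw [FF_eq m h]; exact gen_sq _ _

lemma FF_adj {m : ℕ} (h : m + 1 < n) :
    FF n m * FF n (m + 1) = -(FF n (m + 1) * FF n m) := by
  rw [FF_eq m (Nat.lt_of_succ_lt h), FF_eq (m + 1) h]
  exact F_anticomm rfl

lemma FF_far {j k : ℕ} (hjk : j ≠ k) (h1 : j + 1 ≠ k) (h2 : k + 1 ≠ j)
    (hj : j < n) (hk : k < n) : FF n j * FF n k = FF n k * FF n j := by
  rw [FF_eq j hj, FF_eq k hk]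
  exact F_comm (Fin.ne_of_val_ne (by simp only [Fin.val_mk]; omega))
    (by simp only [Fin.val_mk]; omega) (by simp only [Fin.val_mk]; omega)

lemma FF_PP_anti {k : ℕ} (h : k + 1 < n) :
    FF n (k + 1) * PP n k = -(PP n k * FF n (k + 1)) ∧
    (∀ j, k + 1 < j → j < n → FF n j * PP n k = PP n k * FF n j) := by
  induction k with
  | zero =>
    constructor
    · exact flip_anti (FF_adj h)
    · intro j h1 h2
      rw [PP_zero]
      exact FF_far (by omega) (by omega) (by omega) h2 (by omega)
  | succ k ih =>
    have hk1 : k + 1 < n := Nat.lt_of_succ_lt h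
    obtain ⟨iha, ihc⟩ := ih hk1
    constructor
    · -- FF (k+2) * (PP k * FF (k+1)) = -((PP k * FF (k+1)) * FF (k+2))
      rw [PP_succ]
      have hcomm : FF n (k + 2) * PP n k = PP n k * FF n (k + 2) :=
        ihc (k + 2) (by omega) h
      have hadj : FF n (k + 1) * FF n (k + 2) = -(FF n (k + 2) * FF n (k + 1)) :=
        FF_adj h
      calc FF n (k + 2) * (PP n k * FF n (k + 1))
          = (FF n (k + 2) * PP n k) * FF n (k + 1) :=
            (mul_assoc (FF n (k + 2)) (PP n k) (FF n (k + 1))).symm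
        _ = (PP n k * FF n (k + 2)) * FF n (k + 1) := by rw [hcomm]
        _ = PP n k * (FF n (k + 2) * FF n (k + 1)) :=
            mul_assoc (PP n k) (FF n (k + 2)) (FF n (k + 1))
        _ = PP n k * (-(FF n (k + 1) * FF n (k + 2))) := by rw [flip_anti hadj]
        _ = -(PP n k * (FF n (k + 1) * FF n (k + 2))) :=
            mul_neg (PP n k) (FF n (k + 1) * FF n (k + 2))
        _ = -((PP n k * FF n (k + 1)) * FF n (k + 2)) := by
            rw [mul_assoc (PP n k) (FF n (k + 1)) (FF n (k + 2))]
    · intro j h1 h2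
      rw [PP_succ]
      have hcomm : FF n j * PP n k = PP n k * FF n j := ihc j (by omega) h2
      have hfar : FF n j * FF n (k + 1) = FF n (k + 1) * FF n j :=
        FF_far (by omega) (by omega) (by omega) h2 hk1
      calc FF n j * (PP n k * FF n (k + 1))
          = (FF n j * PP n k) * FF n (k + 1) :=
            (mul_assoc (FF n j) (PP n k) (FF n (k + 1))).symm
        _ = (PP n k * FF n j) * FF n (k + 1) := by rw [hcomm]
        _ = PP n k * (FF n j * FF n (k + 1)) :=
            mul_assoc (PP n k) (FF n j) (FF n (k + 1))
        _ = PP n k * (FF n (k + 1) * FF n j) := by rw [hfar]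
        _ = (PP n k * FF n (k + 1)) * FF n j :=
            (mul_assoc (PP n k) (FF n (k + 1)) (FF n j)).symm

lemma PP_sq {k : ℕ} (hk : k < n) : PP n k * PP n k = -1 := by
  induction k with
  | zero => exact FF_sq hk
  | succ k ih =>
    have hk' : k < n := Nat.lt_of_succ_lt hk
    rw [PP_succ]
    exact pair_sq (ih hk') (FF_sq hk) (flip_anti (FF_PP_anti hk).1)

lemma PP_anticomm {i j : ℕ} (hij : i < j) (hj : j < n) :
    PP n i * PP n j = -(PP n j * PP n i) := by
  induction j with
  | zero => omega
  | succ j ih =>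
    rcases Nat.lt_or_ge i j with hij' | hij'
    · have hj' : j < n := Nat.lt_of_succ_lt hj
      have hcomm : FF n (j + 1) * PP n i = PP n i * FF n (j + 1) :=
        (FF_PP_anti (k := i) (by omega)).2 (j + 1) (by omega) hj
      have ih' := ih hij' hj'
      rw [PP_succ]
      calc PP n i * (PP n j * FF n (j + 1))
          = (PP n i * PP n j) * FF n (j + 1) :=
            (mul_assoc (PP n i) (PP n j) (FF n (j + 1))).symm
        _ = (-(PP n j * PP n i)) * FF n (j + 1) := by rw [ih']
        _ = -((PP n j * PP n i) * FF n (j + 1)) :=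
            neg_mul (PP n j * PP n i) (FF n (j + 1))
        _ = -(PP n j * (PP n i * FF n (j + 1))) := by
            rw [mul_assoc (PP n j) (PP n i) (FF n (j + 1))]
        _ = -(PP n j * (FF n (j + 1) * PP n i)) := by rw [hcomm]
        _ = -((PP n j * FF n (j + 1)) * PP n i) := by
            rw [mul_assoc (PP n j) (FF n (j + 1)) (PP n i)]
    · have hii : i = j := by omega
      subst hii
      have hi : i < n := Nat.lt_of_succ_lt hj
      have hanti : FF n (i + 1) * PP n i = -(PP n i * FF n (i + 1)) :=
        (FF_PP_anti hj).1
      rw [PP_succ]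
      have lhs : PP n i * (PP n i * FF n (i + 1)) = -(FF n (i + 1)) :=
        sq_telescope (PP_sq hi)
      have rhs : (PP n i * FF n (i + 1)) * PP n i = FF n (i + 1) := by
        calc (PP n i * FF n (i + 1)) * PP n i
            = PP n i * (FF n (i + 1) * PP n i) :=
              mul_assoc (PP n i) (FF n (i + 1)) (PP n i)
          _ = PP n i * (-(PP n i * FF n (i + 1))) := by rw [hanti]
          _ = -(PP n i * (PP n i * FF n (i + 1))) :=
              mul_neg (PP n i) (PP n i * FF n (i + 1))
          _ = -(-(FF n (i + 1))) := by rw [sq_telescope (PP_sq hi)]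
          _ = FF n (i + 1) := neg_neg (FF n (i + 1))
      rw [lhs, rhs]

lemma PP_anticomm' {i j : ℕ} (hij : i ≠ j) (hi : i < n) (hj : j < n) :
    PP n i * PP n j = -(PP n j * PP n i) := by
  rcases Nat.lt_or_ge i j with h | h
  · exact PP_anticomm h hj
  · exact flip_anti (PP_anticomm (by omega) hi)

/-- The image of the `i`-th path generator in the complete-graph algebra. -/
noncomputable def fgen (n : ℕ) (i : Fin n) :
    GraphCliffordAlgebra (⊤ : SimpleGraph (Fin n)) :=
  if (i : ℕ) = 0 then gen (⊤ : SimpleGraph (Fin n)) i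
  else gen (⊤ : SimpleGraph (Fin n))
        ⟨(i : ℕ) - 1, Nat.lt_of_le_of_lt (Nat.sub_le _ _) i.isLt⟩ *
      gen (⊤ : SimpleGraph (Fin n)) i

/-- The image of the `i`-th complete-graph generator in the path-graph algebra. -/
noncomputable def ggen (n : ℕ) (i : Fin n) : GraphCliffordAlgebra (pathG n) :=
  ((-1 : ℂ) ^ (i : ℕ)) • PP n (i : ℕ)

lemma fgen_sq (i : Fin n) : fgen n i * fgen n i = -1 := by
  unfold fgen
  split_ifs with h0
  · exact gen_sq _ _
  · exact pair_sq (gen_sq _ _) (gen_sq _ _)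
      (E_anticomm (Fin.ne_of_val_ne (by simp only [Fin.val_mk]; omega)))

lemma fgen_anticomm {i j : Fin n} (h : (i : ℕ) + 1 = j) :
    fgen n i * fgen n j = -(fgen n j * fgen n i) := by
  have hj0 : ¬ ((j : ℕ) = 0) := by omega
  have hji : ((⟨(j : ℕ) - 1, Nat.lt_of_le_of_lt (Nat.sub_le _ _) j.isLt⟩ : Fin n)) = i := by
    apply Fin.ext; simp only [Fin.val_mk]; omega
  unfold fgen
  rw [if_neg hj0, hji]
  split_ifs with h0
  · exact anti_base (gen_sq _ _)
      (flip_anti (E_anticomm (Fin.ne_of_val_ne (by omega))))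
  · exact pair_adj (gen_sq _ _)
      (E_anticomm (Fin.ne_of_val_ne (by simp only [Fin.val_mk]; omega)))
      (E_anticomm (Fin.ne_of_val_ne (by omega)))
      (E_anticomm (Fin.ne_of_val_ne (by simp only [Fin.val_mk]; omega)))

lemma fgen_comm' {i j : Fin n} (hlt : (i : ℕ) < j) (hne1 : (i : ℕ) + 1 ≠ j) :
    fgen n i * fgen n j = fgen n j * fgen n i := by
  have hj0 : ¬ ((j : ℕ) = 0) := by omega
  unfold fgen
  rw [if_neg hj0]
  split_ifs with h0
  · exact comm_single
      (E_anticomm (Fin.ne_of_val_ne (by simp only [Fin.val_mk]; omega)))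
      (E_anticomm (Fin.ne_of_val_ne (by omega)))
  · exact comm_pairs
      (E_anticomm (Fin.ne_of_val_ne (by simp only [Fin.val_mk]; omega)))
      (E_anticomm (Fin.ne_of_val_ne (by simp only [Fin.val_mk]; omega)))
      (E_anticomm (Fin.ne_of_val_ne (by simp only [Fin.val_mk]; omega)))
      (E_anticomm (Fin.ne_of_val_ne (by omega)))

lemma fwd_rel : ∀ ⦃x y : FreeAlgebra ℂ (Fin n)⦄, CliffordRel (pathG n) x y →
    (FreeAlgebra.lift ℂ (fgen n)) x = (FreeAlgebra.lift ℂ (fgen n)) y := by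
  intro x y h
  induction h with
  | sq i => simpa using fgen_sq i
  | anticomm h =>
    rename_i i j
    rw [pathG_adj] at h
    obtain ⟨hne, h1 | h1⟩ := h
    · simpa using fgen_anticomm h1
    · simpa using flip_anti (fgen_anticomm h1)
  | comm hne h =>
    rename_i i j
    rw [pathG_adj] at h
    push_neg at h
    have h2 := h hne
    obtain ⟨ha, hb⟩ := h2
    have hne' : (i : ℕ) ≠ (j : ℕ) := fun e => hne (Fin.ext e)
    simp only [map_mul, FreeAlgebra.lift_ι_apply]
    rcases Nat.lt_or_ge (i : ℕ) ((j : ℕ)) with hlt | hge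
    · exact fgen_comm' hlt ha
    · exact (fgen_comm' (by omega) hb).symm

lemma ggen_mul (i j : Fin n) :
    ggen n i * ggen n j =
      ((-1 : ℂ) ^ (i : ℕ) * (-1 : ℂ) ^ (j : ℕ)) • (PP n (i : ℕ) * PP n (j : ℕ)) :=
  smul_mul_smul_comm ((-1 : ℂ) ^ (i : ℕ)) (PP n (i : ℕ)) ((-1 : ℂ) ^ (j : ℕ))
    (PP n (j : ℕ))

lemma bwd_rel : ∀ ⦃x y : FreeAlgebra ℂ (Fin n)⦄,
    CliffordRel (⊤ : SimpleGraph (Fin n)) x y →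
    (FreeAlgebra.lift ℂ (ggen n)) x = (FreeAlgebra.lift ℂ (ggen n)) y := by
  intro x y h
  induction h with
  | sq i =>
    simp only [map_mul, map_neg, map_one, FreeAlgebra.lift_ι_apply]
    rw [ggen_mul i i, ← pow_add, Even.neg_one_pow ⟨(i : ℕ), rfl⟩,
      one_smul ℂ (PP n (i : ℕ) * PP n (i : ℕ)), PP_sq i.isLt]
  | anticomm h =>
    rename_i i j
    have hne : (i : ℕ) ≠ (j : ℕ) := by
      intro e
      exact (by simpa using h : i ≠ j) (Fin.ext e)
    simp only [map_mul, map_neg, FreeAlgebra.lift_ι_apply]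
    rw [ggen_mul i j, ggen_mul j i, PP_anticomm' hne i.isLt j.isLt,
      mul_comm ((-1 : ℂ) ^ (i : ℕ)) ((-1 : ℂ) ^ (j : ℕ)),
      smul_neg ((-1 : ℂ) ^ (j : ℕ) * (-1 : ℂ) ^ (i : ℕ))
        (PP n (j : ℕ) * PP n (i : ℕ))]
  | comm hne h =>
    exact absurd (by simpa using hne) (by simpa using h)

/-- The forward algebra homomorphism. -/
noncomputable def phi (n : ℕ) :
    GraphCliffordAlgebra (pathG n) →ₐ[ℂ]
      GraphCliffordAlgebra (⊤ : SimpleGraph (Fin n)) :=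
  RingQuot.liftAlgHom ℂ ⟨FreeAlgebra.lift ℂ (fgen n), fwd_rel⟩

/-- The backward algebra homomorphism. -/
noncomputable def psi (n : ℕ) :
    GraphCliffordAlgebra (⊤ : SimpleGraph (Fin n)) →ₐ[ℂ]
      GraphCliffordAlgebra (pathG n) :=
  RingQuot.liftAlgHom ℂ ⟨FreeAlgebra.lift ℂ (ggen n), bwd_rel⟩

lemma phi_gen (i : Fin n) : phi n (gen (pathG n) i) = fgen n i := by
  unfold phi gen
  rw [RingQuot.liftAlgHom_mkAlgHom_apply]
  exact FreeAlgebra.lift_ι_apply _ _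

lemma psi_gen (i : Fin n) :
    psi n (gen (⊤ : SimpleGraph (Fin n)) i) = ggen n i := by
  unfold psi gen
  rw [RingQuot.liftAlgHom_mkAlgHom_apply]
  exact FreeAlgebra.lift_ι_apply _ _

lemma gen_eq_FF (i : Fin n) : gen (pathG n) i = FF n (i : ℕ) := by
  rw [FF_eq (i : ℕ) i.isLt]

lemma phi_PP (k : ℕ) (hk : k < n) :
    phi n (PP n k) = ((-1 : ℂ) ^ k) • gen (⊤ : SimpleGraph (Fin n)) ⟨k, hk⟩ := by
  induction k with
  | zero =>
    rw [PP_zero, FF_eq 0 hk, phi_gen, pow_zero,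
      one_smul ℂ (gen (⊤ : SimpleGraph (Fin n)) ⟨0, hk⟩)]
    unfold fgen
    rw [if_pos rfl]
  | succ k ih =>
    have hk' : k < n := Nat.lt_of_succ_lt hk
    have hFF : phi n (FF n (k + 1)) =
        gen (⊤ : SimpleGraph (Fin n)) ⟨k, hk'⟩ *
          gen (⊤ : SimpleGraph (Fin n)) ⟨k + 1, hk⟩ := by
      rw [FF_eq (k + 1) hk, phi_gen]
      unfold fgen
      rw [if_neg (by simp only [Fin.val_mk]; omega)]
      congr 1
    have e1 : phi n (PP n (k + 1)) = phi n (PP n k) * phi n (FF n (k + 1)) := by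
      rw [PP_succ]; exact map_mul (phi n) (PP n k) (FF n (k + 1))
    set Ek := gen (⊤ : SimpleGraph (Fin n)) ⟨k, hk'⟩ with hEk
    set Ek1 := gen (⊤ : SimpleGraph (Fin n)) ⟨k + 1, hk⟩ with hEk1
    rw [e1, ih hk', hFF]
    have e2 : ((-1 : ℂ) ^ k • Ek) * (Ek * Ek1) = (-1 : ℂ) ^ k • (Ek * (Ek * Ek1)) :=
      smul_mul_assoc ((-1 : ℂ) ^ k) Ek (Ek * Ek1)
    have e3 : Ek * (Ek * Ek1) = -Ek1 := sq_telescope (gen_sq _ _)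
    rw [e2, e3, smul_neg ((-1 : ℂ) ^ k) Ek1, ← neg_smul ((-1 : ℂ) ^ k) Ek1]
    congr 1
    rw [pow_succ]
    ring

lemma psi_phi_gen (i : Fin n) : psi n (phi n (gen (pathG n) i)) = gen (pathG n) i := by
  rw [phi_gen]
  unfold fgen
  split_ifs with h0
  · rw [psi_gen, ggen, h0, pow_zero, one_smul ℂ (PP n 0), PP_zero, gen_eq_FF, h0]
  · obtain ⟨m, hm⟩ : ∃ m, (i : ℕ) = m + 1 := ⟨(i : ℕ) - 1, by omega⟩
    have hm_n : m < n := by have := i.isLt; omega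
    rw [map_mul (psi n), psi_gen, psi_gen, ggen_mul]
    rw [show ((⟨(i : ℕ) - 1, Nat.lt_of_le_of_lt (Nat.sub_le _ _) i.isLt⟩ : Fin n) : ℕ)
      = (i : ℕ) - 1 from rfl, hm, Nat.add_sub_cancel]
    have hP : PP n m * PP n (m + 1) = -(FF n (m + 1)) := by
      rw [PP_succ]
      exact sq_telescope (PP_sq hm_n)
    rw [hP, ← pow_add, Odd.neg_one_pow ⟨m, by omega⟩,
      smul_neg (-1 : ℂ) (FF n (m + 1)), neg_one_smul ℂ (FF n (m + 1)),
      neg_neg, gen_eq_FF, hm]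

lemma phi_psi_gen (i : Fin n) :
    phi n (psi n (gen (⊤ : SimpleGraph (Fin n)) i)) =
      gen (⊤ : SimpleGraph (Fin n)) i := by
  rw [psi_gen, ggen, map_smul (phi n) ((-1 : ℂ) ^ (i : ℕ)) (PP n (i : ℕ)),
    phi_PP (i : ℕ) i.isLt,
    smul_smul ((-1 : ℂ) ^ (i : ℕ)) ((-1 : ℂ) ^ (i : ℕ)), ← pow_add,
    Even.neg_one_pow ⟨(i : ℕ), rfl⟩,
    one_smul ℂ (gen (⊤ : SimpleGraph (Fin n)) ⟨(i : ℕ), i.isLt⟩), Fin.eta]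

lemma psi_phi : (psi n).comp (phi n) = AlgHom.id ℂ (GraphCliffordAlgebra (pathG n)) := by
  apply RingQuot.ringQuot_ext'
  apply FreeAlgebra.hom_ext
  funext i
  simpa [gen] using psi_phi_gen i

lemma phi_psi : (phi n).comp (psi n) =
    AlgHom.id ℂ (GraphCliffordAlgebra (⊤ : SimpleGraph (Fin n))) := by
  apply RingQuot.ringQuot_ext'
  apply FreeAlgebra.hom_ext
  funext i
  simpa [gen] using phi_psi_gen i

end PathIsoAux

/-- The Clifford graph algebra of the complete graph `K_n` is isomorphic to that of the
path graph `P_n`, via `e'_1 ↦ e_1` and `e'_i ↦ e_{i-1} e_i` for `i ≥ 2`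
(in 0-indexed form: `e'_0 ↦ e_0` and `e'_i ↦ e_{i-1} e_i` for `i > 0`). -/
theorem pathGraph_iso_completeGraph (n : ℕ) :
    ∃ φ : GraphCliffordAlgebra (pathG n) ≃ₐ[ℂ]
        GraphCliffordAlgebra (⊤ : SimpleGraph (Fin n)),
      ∀ i : Fin n,
        φ (gen (pathG n) i) =
          if (i : ℕ) = 0 then gen (⊤ : SimpleGraph (Fin n)) i
          else gen (⊤ : SimpleGraph (Fin n))
                 ⟨(i : ℕ) - 1, Nat.lt_of_le_of_lt (Nat.sub_le _ _) i.isLt⟩ *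
               gen (⊤ : SimpleGraph (Fin n)) i := by
  refine ⟨AlgEquiv.ofAlgHom (PathIsoAux.phi n) (PathIsoAux.psi n)
    PathIsoAux.phi_psi PathIsoAux.psi_phi, fun i => ?_⟩
  show PathIsoAux.phi n (gen (pathG n) i) = _
  rw [PathIsoAux.phi_gen, PathIsoAux.fgen]
end

section
/- Let G be a finite simple graph with at least one edge. Then there exists a graph G' on the same vertex set which is the disjoint union of a single edge K_2 with a graph on the remaining vertices, such that the Clifford graph algebras A_G and A_{G'} are isomorphic. -/
open FreeAlgebra

section Helpers
variable {V : Type} {H : SimpleGraph V}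

@[simp] theorem gen_sq (i : V) : gen H i * gen H i = -1 := by
  have h := RingQuot.mkAlgHom_rel ℂ (CliffordRel.sq (G := H) i)
  simpa [gen, map_mul] using h

theorem gen_anti {i j : V} (h : H.Adj i j) :
    gen H i * gen H j = -(gen H j * gen H i) := by
  have h2 := RingQuot.mkAlgHom_rel ℂ (CliffordRel.anticomm (G := H) h)
  simpa [gen, map_mul] using h2

theorem gen_comm {i j : V} (hne : i ≠ j) (h : ¬ H.Adj i j) :
    gen H i * gen H j = gen H j * gen H i := by
  have h2 := RingQuot.mkAlgHom_rel ℂ (CliffordRel.comm (G := H) hne h)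
  simpa [gen, map_mul] using h2

theorem swN {A : Type*} [Ring A] {x y : A} (h : y * x = -(x * y)) (t : A) :
    y * (x * t) = -(x * (y * t)) := by rw [← mul_assoc, h, neg_mul, mul_assoc]

theorem swP {A : Type*} [Ring A] {x y : A} (h : y * x = x * y) (t : A) :
    y * (x * t) = x * (y * t) := by rw [← mul_assoc, h, mul_assoc]

@[simp] theorem gen_sq' (i : V) (t : GraphCliffordAlgebra H) :
    gen H i * (gen H i * t) = -t := by
  rw [← mul_assoc, gen_sq]; exact neg_one_mul t

open scoped Classical in
theorem gen_swap {i j : V} (hne : i ≠ j) :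
    gen H i * gen H j = if H.Adj i j then -(gen H j * gen H i) else gen H j * gen H i := by
  split_ifs with hA
  · exact gen_anti hA
  · exact gen_comm hne hA

open scoped Classical in
theorem gen_swap' {i j : V} (hne : i ≠ j) (t : GraphCliffordAlgebra H) :
    gen H i * (gen H j * t) =
      if H.Adj i j then -(gen H j * (gen H i * t)) else gen H j * (gen H i * t) := by
  split_ifs with hA
  · exact swN (gen_anti hA) t
  · exact swP (gen_comm hne hA) t

theorem qneg_mul (a b : GraphCliffordAlgebra H) : (-a) * b = -(a * b) := neg_mul a b
theorem qmul_neg (a b : GraphCliffordAlgebra H) : a * (-b) = -(a * b) := mul_neg a b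
theorem qneg_neg (a : GraphCliffordAlgebra H) : -(-a) = a := neg_neg a
theorem qsmul_neg (r : ℂ) (a : GraphCliffordAlgebra H) : r • (-a) = -(r • a) := smul_neg r a
theorem qneg_smul (r : ℂ) (a : GraphCliffordAlgebra H) : (-r) • a = -(r • a) := neg_smul r a

end Helpers

section Main
variable {n : ℕ} (G : SimpleGraph (Fin n)) (u v : Fin n)

/-- Adjacency among "other" vertices in the modified graph. -/
def Sig (x y : Fin n) : Prop :=
  Xor' (G.Adj x y) (Xor' (G.Adj x u ∧ G.Adj y v) (G.Adj x v ∧ G.Adj y u))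

theorem Sig_symm {x y : Fin n} (h : Sig G u v x y) : Sig G u v y x := by
  unfold Sig Xor' Xor at *
  have h1 := G.adj_comm x y
  tauto

theorem Sig_irrefl (x : Fin n) : ¬ Sig G u v x x := by
  unfold Sig Xor' Xor
  have := G.loopless.irrefl x
  tauto

/-- The modified graph: `u,v` form an isolated edge, and other vertices get twisted
adjacency. -/
def Gp (huv : G.Adj u v) : SimpleGraph (Fin n) where
  Adj x y := (x = u ∧ y = v) ∨ (x = v ∧ y = u) ∨
    (x ≠ u ∧ x ≠ v ∧ y ≠ u ∧ y ≠ v ∧ Sig G u v x y)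
  symm := by
    refine ⟨?_⟩
    rintro x y (⟨h1, h2⟩ | ⟨h1, h2⟩ | ⟨h1, h2, h3, h4, h5⟩)
    · exact Or.inr (Or.inl ⟨h2, h1⟩)
    · exact Or.inl ⟨h2, h1⟩
    · exact Or.inr (Or.inr ⟨h3, h4, h1, h2, Sig_symm G u v h5⟩)
  loopless := by
    refine ⟨?_⟩
    rintro x (⟨h1, h2⟩ | ⟨h1, h2⟩ | ⟨h1, h2, h3, h4, h5⟩)
    · exact huv.ne (h1 ▸ h2)
    · exact huv.ne (h2.symm.trans h1)
    · exact Sig_irrefl G u v x h5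

theorem Gp_adj (huv : G.Adj u v) (x y : Fin n) :
    (Gp G u v huv).Adj x y ↔ (x = u ∧ y = v) ∨ (x = v ∧ y = u) ∨
      (x ≠ u ∧ x ≠ v ∧ y ≠ u ∧ y ≠ v ∧ Sig G u v x y) := Iff.rfl

open scoped Classical in
/-- The new generators. -/
noncomputable def Ff (H : SimpleGraph (Fin n)) (w : Fin n) : GraphCliffordAlgebra H :=
  if w = u ∨ w = v then gen H w
  else if G.Adj w u then
    (if G.Adj w v then Complex.I • (gen H w * gen H u * gen H v)
     else Complex.I • (gen H w * gen H v))
  else (if G.Adj w v then Complex.I • (gen H w * gen H u) else gen H w)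

end Main

section Rel
variable {n : ℕ} (G : SimpleGraph (Fin n)) (u v : Fin n)

set_option maxHeartbeats 2000000 in
theorem relGp (huv : G.Adj u v) :
    ∀ ⦃x y⦄, CliffordRel (Gp G u v huv) x y →
      (FreeAlgebra.lift ℂ (Ff G u v G)) x = (FreeAlgebra.lift ℂ (Ff G u v G)) y := by
  intro x y r
  have hvu : v ≠ u := huv.ne'
  have hvu' : G.Adj v u := huv.symm
  induction r with
  | sq i =>
    simp only [map_mul, map_neg, map_one, lift_ι_apply]
    rcases eq_or_ne i u with rfl | hiu
    · simp [Ff]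
    rcases eq_or_ne i v with rfl | hiv
    · simp [Ff]
    by_cases hau : G.Adj i u <;> by_cases hav : G.Adj i v <;>
      simp [Ff, hiu, hiv, hau, hav, hvu', gen_swap (H := G) hvu, gen_swap' (H := G) hvu,
        gen_swap hiu, gen_swap' hiu, gen_swap hiv, gen_swap' hiv,
        smul_smul, Complex.I_mul_I, mul_assoc, smul_mul_assoc, mul_smul_comm, qneg_mul,
        qmul_neg, qneg_neg, qsmul_neg, qneg_smul]
  | @anticomm i j h =>
    have hji : _ ≠ _ := h.ne'
    simp only [map_mul, map_neg, lift_ι_apply]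
    rcases h with ⟨rfl, rfl⟩ | ⟨rfl, rfl⟩ | ⟨hiu, hiv, hju, hjv, hs⟩
    · simp [Ff, gen_anti huv]
    · simp [Ff, gen_anti hvu']
    · by_cases hau : G.Adj i u <;> by_cases hav : G.Adj i v <;>
        by_cases hbu : G.Adj j u <;> by_cases hbv : G.Adj j v <;>
        by_cases hadj : G.Adj j i <;>
        first
        | (exfalso; revert hs; have hc := G.adj_comm i j; simp only [Sig, Xor', Xor]; tauto)
        | simp [Ff, hiu, hiv, hju, hjv, hau, hav, hbu, hbv, hadj, hvu',
            gen_swap (H := G) hvu, gen_swap' (H := G) hvu,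
            gen_swap hiu, gen_swap' hiu, gen_swap hiv, gen_swap' hiv,
            gen_swap hju, gen_swap' hju, gen_swap hjv, gen_swap' hjv,
            gen_swap hji, gen_swap' hji,
            smul_smul, Complex.I_mul_I, mul_assoc, smul_mul_assoc, mul_smul_comm, qneg_mul,
            qmul_neg, qneg_neg, qsmul_neg, qneg_smul]
  | @comm i j hne h =>
    simp only [map_mul, lift_ι_apply]
    by_cases hiu : i = u
    · by_cases hjv : j = v
      · exact absurd (Or.inl ⟨hiu, hjv⟩) h
      · have hju : j ≠ u := fun e => hne (hiu.trans e.symm)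
        by_cases hbu : G.Adj j u <;> by_cases hbv : G.Adj j v <;>
          simp [Ff, hiu, hju, hjv, hbu, hbv, hvu',
            gen_swap (H := G) hvu, gen_swap' (H := G) hvu,
            gen_swap hju, gen_swap' hju, gen_swap hjv, gen_swap' hjv,
            smul_smul, Complex.I_mul_I, mul_assoc, smul_mul_assoc, mul_smul_comm, qneg_mul,
            qmul_neg, qneg_neg, qsmul_neg, qneg_smul]
    by_cases hiv : i = v
    · by_cases hju : j = u
      · exact absurd (Or.inr (Or.inl ⟨hiv, hju⟩)) h
      · have hjv : j ≠ v := fun e => hne (hiv.trans e.symm)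
        by_cases hbu : G.Adj j u <;> by_cases hbv : G.Adj j v <;>
          simp [Ff, hiv, hju, hjv, hbu, hbv, hvu',
            gen_swap (H := G) hvu, gen_swap' (H := G) hvu,
            gen_swap hju, gen_swap' hju, gen_swap hjv, gen_swap' hjv,
            smul_smul, Complex.I_mul_I, mul_assoc, smul_mul_assoc, mul_smul_comm, qneg_mul,
            qmul_neg, qneg_neg, qsmul_neg, qneg_smul]
    by_cases hju : j = u
    · by_cases hau : G.Adj i u <;> by_cases hav : G.Adj i v <;>
        simp [Ff, hiu, hiv, hju, hau, hav, hvu',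
          gen_swap (H := G) hvu, gen_swap' (H := G) hvu,
          gen_swap hiu, gen_swap' hiu, gen_swap hiv, gen_swap' hiv,
          smul_smul, Complex.I_mul_I, mul_assoc, smul_mul_assoc, mul_smul_comm, qneg_mul,
          qmul_neg, qneg_neg, qsmul_neg, qneg_smul]
    by_cases hjv : j = v
    · by_cases hau : G.Adj i u <;> by_cases hav : G.Adj i v <;>
        simp [Ff, hiu, hiv, hjv, hau, hav, hvu',
          gen_swap (H := G) hvu, gen_swap' (H := G) hvu,
          gen_swap hiu, gen_swap' hiu, gen_swap hiv, gen_swap' hiv,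
          smul_smul, Complex.I_mul_I, mul_assoc, smul_mul_assoc, mul_smul_comm, qneg_mul,
          qmul_neg, qneg_neg, qsmul_neg, qneg_smul]
    · have hs : ¬ Sig G u v i j := fun hsig => h (Or.inr (Or.inr ⟨hiu, hiv, hju, hjv, hsig⟩))
      have hji : j ≠ i := hne.symm
      by_cases hau : G.Adj i u <;> by_cases hav : G.Adj i v <;>
        by_cases hbu : G.Adj j u <;> by_cases hbv : G.Adj j v <;>
        by_cases hadj : G.Adj j i <;>
        first
        | (exfalso; apply hs; have hc := G.adj_comm i j; simp only [Sig, Xor', Xor]; tauto)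
        | simp [Ff, hiu, hiv, hju, hjv, hau, hav, hbu, hbv, hadj, hvu',
            gen_swap (H := G) hvu, gen_swap' (H := G) hvu,
            gen_swap hiu, gen_swap' hiu, gen_swap hiv, gen_swap' hiv,
            gen_swap hju, gen_swap' hju, gen_swap hjv, gen_swap' hjv,
            gen_swap hji, gen_swap' hji,
            smul_smul, Complex.I_mul_I, mul_assoc, smul_mul_assoc, mul_smul_comm, qneg_mul,
            qmul_neg, qneg_neg, qsmul_neg, qneg_smul]

set_option maxHeartbeats 4000000 in
theorem relG (huv : G.Adj u v) :
    ∀ ⦃x y⦄, CliffordRel G x y →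
      (FreeAlgebra.lift ℂ (Ff G u v (Gp G u v huv))) x =
        (FreeAlgebra.lift ℂ (Ff G u v (Gp G u v huv))) y := by
  intro x y r
  have hvu : v ≠ u := huv.ne'
  induction r with
  | sq i =>
    simp only [map_mul, map_neg, map_one, lift_ι_apply]
    by_cases hiu : i = u
    · simp [Ff, hiu]
    by_cases hiv : i = v
    · simp [Ff, hiv]
    by_cases hau : G.Adj i u <;> by_cases hav : G.Adj i v <;>
      simp [Ff, hiu, hiv, hau, hav,
        Gp_adj, Sig, Xor', hvu,
            gen_swap (H := Gp G u v huv) hvu, gen_swap' (H := Gp G u v huv) hvu,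
            gen_swap (H := Gp G u v huv) hiu, gen_swap' (H := Gp G u v huv) hiu,
            gen_swap (H := Gp G u v huv) hiv, gen_swap' (H := Gp G u v huv) hiv,
            smul_smul, Complex.I_mul_I, mul_assoc, smul_mul_assoc, mul_smul_comm, qneg_mul,
            qmul_neg, qneg_neg, qsmul_neg, qneg_smul]
  | @anticomm i j h =>
    simp only [map_mul, map_neg, lift_ι_apply]
    by_cases hiu : i = u
    · by_cases hjv : j = v
      · simp [Ff, hiu, hjv, gen_anti (show (Gp G u v huv).Adj u v from Or.inl ⟨rfl, rfl⟩)]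
      · have hju : j ≠ u := fun e => h.ne (hiu.trans e.symm)
        have hbu : G.Adj j u := by rw [← hiu]; exact h.symm
        by_cases hbv : G.Adj j v <;>
          simp [Ff, hiu, hju, hjv, hbu, hbv,
            Gp_adj, Sig, Xor', hvu,
            gen_swap (H := Gp G u v huv) hvu, gen_swap' (H := Gp G u v huv) hvu,
            gen_swap (H := Gp G u v huv) hju, gen_swap' (H := Gp G u v huv) hju,
            gen_swap (H := Gp G u v huv) hjv, gen_swap' (H := Gp G u v huv) hjv,
            smul_smul, Complex.I_mul_I, mul_assoc, smul_mul_assoc, mul_smul_comm, qneg_mul,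
            qmul_neg, qneg_neg, qsmul_neg, qneg_smul]
    by_cases hiv : i = v
    · by_cases hju : j = u
      · simp [Ff, hiv, hju, gen_anti (show (Gp G u v huv).Adj v u from Or.inr (Or.inl ⟨rfl, rfl⟩))]
      · have hjv : j ≠ v := fun e => h.ne (hiv.trans e.symm)
        have hbv : G.Adj j v := by rw [← hiv]; exact h.symm
        by_cases hbu : G.Adj j u <;>
          simp [Ff, hiv, hju, hjv, hbu, hbv,
            Gp_adj, Sig, Xor', hvu,
            gen_swap (H := Gp G u v huv) hvu, gen_swap' (H := Gp G u v huv) hvu,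
            gen_swap (H := Gp G u v huv) hju, gen_swap' (H := Gp G u v huv) hju,
            gen_swap (H := Gp G u v huv) hjv, gen_swap' (H := Gp G u v huv) hjv,
            smul_smul, Complex.I_mul_I, mul_assoc, smul_mul_assoc, mul_smul_comm, qneg_mul,
            qmul_neg, qneg_neg, qsmul_neg, qneg_smul]
    by_cases hju : j = u
    · have hau : G.Adj i u := by rw [← hju]; exact h
      by_cases hav : G.Adj i v <;>
        simp [Ff, hiu, hiv, hju, hau, hav,
          Gp_adj, Sig, Xor', hvu,
            gen_swap (H := Gp G u v huv) hvu, gen_swap' (H := Gp G u v huv) hvu,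
            gen_swap (H := Gp G u v huv) hiu, gen_swap' (H := Gp G u v huv) hiu,
            gen_swap (H := Gp G u v huv) hiv, gen_swap' (H := Gp G u v huv) hiv,
            smul_smul, Complex.I_mul_I, mul_assoc, smul_mul_assoc, mul_smul_comm, qneg_mul,
            qmul_neg, qneg_neg, qsmul_neg, qneg_smul]
    by_cases hjv : j = v
    · have hav : G.Adj i v := by rw [← hjv]; exact h
      by_cases hau : G.Adj i u <;>
        simp [Ff, hiu, hiv, hjv, hau, hav,
          Gp_adj, Sig, Xor', hvu,
            gen_swap (H := Gp G u v huv) hvu, gen_swap' (H := Gp G u v huv) hvu,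
            gen_swap (H := Gp G u v huv) hiu, gen_swap' (H := Gp G u v huv) hiu,
            gen_swap (H := Gp G u v huv) hiv, gen_swap' (H := Gp G u v huv) hiv,
            smul_smul, Complex.I_mul_I, mul_assoc, smul_mul_assoc, mul_smul_comm, qneg_mul,
            qmul_neg, qneg_neg, qsmul_neg, qneg_smul]
    · have hji : j ≠ i := h.ne'
      have hadj : G.Adj j i := h.symm
      by_cases hau : G.Adj i u <;> by_cases hav : G.Adj i v <;>
        by_cases hbu : G.Adj j u <;> by_cases hbv : G.Adj j v <;>
        simp [Ff, hiu, hiv, hju, hjv, hau, hav, hbu, hbv, hadj, h,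
            Gp_adj, Sig, Xor', hvu,
            gen_swap (H := Gp G u v huv) hvu, gen_swap' (H := Gp G u v huv) hvu,
            gen_swap (H := Gp G u v huv) hiu, gen_swap' (H := Gp G u v huv) hiu,
            gen_swap (H := Gp G u v huv) hiv, gen_swap' (H := Gp G u v huv) hiv,
            gen_swap (H := Gp G u v huv) hju, gen_swap' (H := Gp G u v huv) hju,
            gen_swap (H := Gp G u v huv) hjv, gen_swap' (H := Gp G u v huv) hjv,
            gen_swap (H := Gp G u v huv) hji, gen_swap' (H := Gp G u v huv) hji,
            smul_smul, Complex.I_mul_I, mul_assoc, smul_mul_assoc, mul_smul_comm, qneg_mul,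
            qmul_neg, qneg_neg, qsmul_neg, qneg_smul]
  | @comm i j hne h =>
    simp only [map_mul, lift_ι_apply]
    by_cases hiu : i = u
    · have hjv : j ≠ v := fun e => h (by rw [hiu, e]; exact huv)
      have hju : j ≠ u := fun e => hne (hiu.trans e.symm)
      have hbu : ¬ G.Adj j u := fun e => h (by rw [hiu]; exact e.symm)
      by_cases hbv : G.Adj j v <;>
        simp [Ff, hiu, hju, hjv, hbu, hbv,
          Gp_adj, Sig, Xor', hvu,
            gen_swap (H := Gp G u v huv) hvu, gen_swap' (H := Gp G u v huv) hvu,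
            gen_swap (H := Gp G u v huv) hju, gen_swap' (H := Gp G u v huv) hju,
            gen_swap (H := Gp G u v huv) hjv, gen_swap' (H := Gp G u v huv) hjv,
            smul_smul, Complex.I_mul_I, mul_assoc, smul_mul_assoc, mul_smul_comm, qneg_mul,
            qmul_neg, qneg_neg, qsmul_neg, qneg_smul]
    by_cases hiv : i = v
    · have hju : j ≠ u := fun e => h (by rw [hiv, e]; exact huv.symm)
      have hjv : j ≠ v := fun e => hne (hiv.trans e.symm)
      have hbv : ¬ G.Adj j v := fun e => h (by rw [hiv]; exact e.symm)
      by_cases hbu : G.Adj j u <;>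
        simp [Ff, hiv, hju, hjv, hbu, hbv,
          Gp_adj, Sig, Xor', hvu,
            gen_swap (H := Gp G u v huv) hvu, gen_swap' (H := Gp G u v huv) hvu,
            gen_swap (H := Gp G u v huv) hju, gen_swap' (H := Gp G u v huv) hju,
            gen_swap (H := Gp G u v huv) hjv, gen_swap' (H := Gp G u v huv) hjv,
            smul_smul, Complex.I_mul_I, mul_assoc, smul_mul_assoc, mul_smul_comm, qneg_mul,
            qmul_neg, qneg_neg, qsmul_neg, qneg_smul]
    by_cases hju : j = u
    · have hau : ¬ G.Adj i u := fun e => h (by rw [hju]; exact e)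
      by_cases hav : G.Adj i v <;>
        simp [Ff, hiu, hiv, hju, hau, hav,
          Gp_adj, Sig, Xor', hvu,
            gen_swap (H := Gp G u v huv) hvu, gen_swap' (H := Gp G u v huv) hvu,
            gen_swap (H := Gp G u v huv) hiu, gen_swap' (H := Gp G u v huv) hiu,
            gen_swap (H := Gp G u v huv) hiv, gen_swap' (H := Gp G u v huv) hiv,
            smul_smul, Complex.I_mul_I, mul_assoc, smul_mul_assoc, mul_smul_comm, qneg_mul,
            qmul_neg, qneg_neg, qsmul_neg, qneg_smul]
    by_cases hjv : j = v
    · have hav : ¬ G.Adj i v := fun e => h (by rw [hjv]; exact e)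
      by_cases hau : G.Adj i u <;>
        simp [Ff, hiu, hiv, hjv, hau, hav,
          Gp_adj, Sig, Xor', hvu,
            gen_swap (H := Gp G u v huv) hvu, gen_swap' (H := Gp G u v huv) hvu,
            gen_swap (H := Gp G u v huv) hiu, gen_swap' (H := Gp G u v huv) hiu,
            gen_swap (H := Gp G u v huv) hiv, gen_swap' (H := Gp G u v huv) hiv,
            smul_smul, Complex.I_mul_I, mul_assoc, smul_mul_assoc, mul_smul_comm, qneg_mul,
            qmul_neg, qneg_neg, qsmul_neg, qneg_smul]
    · have hji : j ≠ i := hne.symm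
      have hadj : ¬ G.Adj j i := fun e => h e.symm
      by_cases hau : G.Adj i u <;> by_cases hav : G.Adj i v <;>
        by_cases hbu : G.Adj j u <;> by_cases hbv : G.Adj j v <;>
        simp [Ff, hiu, hiv, hju, hjv, hau, hav, hbu, hbv, hadj, h,
            Gp_adj, Sig, Xor', hvu,
            gen_swap (H := Gp G u v huv) hvu, gen_swap' (H := Gp G u v huv) hvu,
            gen_swap (H := Gp G u v huv) hiu, gen_swap' (H := Gp G u v huv) hiu,
            gen_swap (H := Gp G u v huv) hiv, gen_swap' (H := Gp G u v huv) hiv,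
            gen_swap (H := Gp G u v huv) hju, gen_swap' (H := Gp G u v huv) hju,
            gen_swap (H := Gp G u v huv) hjv, gen_swap' (H := Gp G u v huv) hjv,
            gen_swap (H := Gp G u v huv) hji, gen_swap' (H := Gp G u v huv) hji,
            smul_smul, Complex.I_mul_I, mul_assoc, smul_mul_assoc, mul_smul_comm, qneg_mul,
            qmul_neg, qneg_neg, qsmul_neg, qneg_smul]

end Rel

section Iso
variable {n : ℕ} (G : SimpleGraph (Fin n)) (u v : Fin n)

noncomputable def phi (huv : G.Adj u v) :
    GraphCliffordAlgebra (Gp G u v huv) →ₐ[ℂ] GraphCliffordAlgebra G :=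
  RingQuot.liftAlgHom ℂ ⟨FreeAlgebra.lift ℂ (Ff G u v G), relGp G u v huv⟩

noncomputable def psi (huv : G.Adj u v) :
    GraphCliffordAlgebra G →ₐ[ℂ] GraphCliffordAlgebra (Gp G u v huv) :=
  RingQuot.liftAlgHom ℂ ⟨FreeAlgebra.lift ℂ (Ff G u v (Gp G u v huv)), relG G u v huv⟩

theorem phi_gen (huv : G.Adj u v) (i : Fin n) :
    phi G u v huv (gen (Gp G u v huv) i) = Ff G u v G i := by
  rw [phi, gen, RingQuot.liftAlgHom_mkAlgHom_apply, lift_ι_apply]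

theorem psi_gen (huv : G.Adj u v) (i : Fin n) :
    psi G u v huv (gen G i) = Ff G u v (Gp G u v huv) i := by
  rw [psi, gen, RingQuot.liftAlgHom_mkAlgHom_apply, lift_ι_apply]

set_option maxHeartbeats 1000000 in
theorem comp1 (huv : G.Adj u v) :
    (psi G u v huv).comp (phi G u v huv) = AlgHom.id ℂ _ := by
  have hvu : v ≠ u := huv.ne'
  apply RingQuot.ringQuot_ext'
  apply FreeAlgebra.hom_ext
  funext i
  show psi G u v huv (phi G u v huv (gen (Gp G u v huv) i)) = gen (Gp G u v huv) i
  rw [phi_gen]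
  by_cases hiu : i = u
  · simp [Ff, hiu, psi_gen]
  by_cases hiv : i = v
  · simp [Ff, hiv, psi_gen]
  by_cases hau : G.Adj i u <;> by_cases hav : G.Adj i v <;>
    simp [Ff, hiu, hiv, hau, hav, psi_gen, map_mul, map_smul,
        Gp_adj, Sig, Xor', hvu,
        gen_swap (H := Gp G u v huv) hvu, gen_swap' (H := Gp G u v huv) hvu,
        gen_swap (H := Gp G u v huv) hiu, gen_swap' (H := Gp G u v huv) hiu,
        gen_swap (H := Gp G u v huv) hiv, gen_swap' (H := Gp G u v huv) hiv,
        smul_smul, Complex.I_mul_I, mul_assoc, smul_mul_assoc, mul_smul_comm, qneg_mul,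
        qmul_neg, qneg_neg, qsmul_neg, qneg_smul]

set_option maxHeartbeats 1000000 in
theorem comp2 (huv : G.Adj u v) :
    (phi G u v huv).comp (psi G u v huv) = AlgHom.id ℂ _ := by
  have hvu : v ≠ u := huv.ne'
  apply RingQuot.ringQuot_ext'
  apply FreeAlgebra.hom_ext
  funext i
  show phi G u v huv (psi G u v huv (gen G i)) = gen G i
  rw [psi_gen]
  by_cases hiu : i = u
  · simp [Ff, hiu, phi_gen]
  by_cases hiv : i = v
  · simp [Ff, hiv, phi_gen]
  have hvu' : G.Adj v u := huv.symm
  by_cases hau : G.Adj i u <;> by_cases hav : G.Adj i v <;>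
    simp [Ff, hiu, hiv, hau, hav, phi_gen, map_mul, map_smul,
        hvu, hvu',
        gen_swap (H := G) hvu, gen_swap' (H := G) hvu,
        gen_swap (H := G) hiu, gen_swap' (H := G) hiu,
        gen_swap (H := G) hiv, gen_swap' (H := G) hiv,
        smul_smul, Complex.I_mul_I, mul_assoc, smul_mul_assoc, mul_smul_comm, qneg_mul,
        qmul_neg, qneg_neg, qsmul_neg, qneg_smul]

end Iso


/-- If `G` has at least one edge, then there is a graph `G'` on the same vertex set which is
the disjoint union of a single edge `K₂` and a graph on the remaining vertices, with
`A_G ≅ A_{G'}`. -/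
theorem exists_iso_K2_union (n : ℕ) (G : SimpleGraph (Fin n))
    (hG : ∃ a b : Fin n, G.Adj a b) :
    ∃ (G' : SimpleGraph (Fin n)) (u v : Fin n), u ≠ v ∧ G'.Adj u v ∧
      (∀ w : Fin n, w ≠ u → w ≠ v → ¬ G'.Adj u w ∧ ¬ G'.Adj v w) ∧
      Nonempty (GraphCliffordAlgebra G ≃ₐ[ℂ] GraphCliffordAlgebra G') := by
  obtain ⟨a, b, hab⟩ := hG
  refine ⟨Gp G a b hab, a, b, hab.ne, Or.inl ⟨rfl, rfl⟩, ?_, ?_⟩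
  · intro w hwa hwb
    constructor
    · rintro (⟨-, h⟩ | ⟨h, -⟩ | ⟨h, -, -, -, -⟩)
      · exact hwb h
      · exact hab.ne h
      · exact h rfl
    · rintro (⟨h, -⟩ | ⟨-, h⟩ | ⟨-, h, -, -, -⟩)
      · exact hab.ne' h
      · exact hwa h
      · exact h rfl
  · exact ⟨AlgEquiv.ofAlgHom (psi G a b hab) (phi G a b hab) (comp1 G a b hab) (comp2 G a b hab)⟩
end

section
/- The center of the Clifford graph algebra of a graph G on n vertices is 1-dimensional if and only if the determinant of the adjacency matrix of G (as an integer matrix) is odd. -/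
set_option maxHeartbeats 1000000
set_option synthInstance.maxHeartbeats 400000


open FreeAlgebra

open scoped Classical in
/-- The adjacency matrix of a graph over `ℤ`. -/
noncomputable def adjMatZ {n : ℕ} (G : SimpleGraph (Fin n)) : Matrix (Fin n) (Fin n) ℤ :=
  fun i j => if G.Adj i j then 1 else 0



open scoped Classical

namespace CGA

lemma z2_cases : ∀ x : ZMod 2, x = 0 ∨ x = 1 := by decide

lemma z2_addself : ∀ x : ZMod 2, x + x = 0 := by decide

noncomputable def sgn (z : ZMod 2) : ℂ := if z = 0 then 1 else -1

lemma sgn_add (x y : ZMod 2) : sgn (x + y) = sgn x * sgn y := by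
  rcases z2_cases x with hx|hx <;> rcases z2_cases y with hy|hy <;>
    subst hx <;> subst hy <;> simp [sgn, show (1+1:ZMod 2)=0 by decide] <;> norm_num

lemma sgn_zero : sgn 0 = 1 := by simp [sgn]

lemma sgn_inj {x y : ZMod 2} (h : sgn x = sgn y) : x = y := by
  rcases z2_cases x with hx|hx <;> rcases z2_cases y with hy|hy <;>
    subst hx <;> subst hy <;> simp_all [sgn] <;> norm_num at h

variable {n : ℕ} (G : SimpleGraph (Fin n))

noncomputable def cMat : Fin n → Fin n → ZMod 2 := fun i j =>
  if i = j then 1 else if j < i ∧ G.Adj i j then 1 else 0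

noncomputable def QF (a b : Fin n → ZMod 2) : ZMod 2 := ∑ i, ∑ j, a i * cMat G i j * b j

lemma QF_add_left (a a' b : Fin n → ZMod 2) :
    QF G (a + a') b = QF G a b + QF G a' b := by
  simp [QF, add_mul, Finset.sum_add_distrib]

lemma QF_add_right (a b b' : Fin n → ZMod 2) :
    QF G a (b + b') = QF G a b + QF G a b' := by
  simp [QF, mul_add, Finset.sum_add_distrib]

lemma QF_zero_left (b : Fin n → ZMod 2) : QF G 0 b = 0 := by simp [QF]

lemma QF_zero_right (a : Fin n → ZMod 2) : QF G a 0 = 0 := by simp [QF]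

def TGA (_G : SimpleGraph (Fin n)) : Type := (Fin n → ZMod 2) → ℂ

noncomputable instance : AddCommGroup (TGA G) := Pi.addCommGroup
noncomputable instance : Module ℂ (TGA G) := Pi.module _ _ _

noncomputable instance : Mul (TGA G) :=
  ⟨fun x y d => ∑ a, x a * y (a + d) * sgn (QF G a (a + d))⟩

lemma tmul_def (x y : TGA G) (d : Fin n → ZMod 2) :
    (x * y) d = ∑ a, x a * y (a + d) * sgn (QF G a (a + d)) := rfl

noncomputable def delta (a : Fin n → ZMod 2) : TGA G := fun d => if d = a then 1 else 0

noncomputable instance : One (TGA G) := ⟨delta G 0⟩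

lemma tone_def (d : Fin n → ZMod 2) : (1 : TGA G) d = if d = 0 then 1 else 0 := rfl

lemma pi_addself (a : Fin n → ZMod 2) : a + a = 0 := funext fun i => z2_addself (a i)

lemma pi_add_cancel (a b : Fin n → ZMod 2) : a + (a + b) = b := by
  rw [← add_assoc, pi_addself, zero_add]

lemma pi_add_eq_zero_iff (a b : Fin n → ZMod 2) : a + b = 0 ↔ a = b := by
  constructor
  · intro h
    have := congrArg (· + b) h
    simpa [add_assoc, pi_addself] using this
  · rintro rfl; exact pi_addself a

lemma cocycle (a b d : Fin n → ZMod 2) :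
    sgn (QF G a b) * sgn (QF G (a + b) (a + b + d)) =
      sgn (QF G b (b + (a + d))) * sgn (QF G a (a + d)) := by
  rw [← sgn_add, ← sgn_add]
  congr 1
  have hb : b + (a + d) = a + (b + d) := by rw [add_left_comm]
  rw [hb]
  have h1 : a + b + d = a + (b + d) := by rw [add_assoc]
  rw [h1]
  simp only [QF_add_left, QF_add_right]
  generalize QF G a a = p1
  generalize QF G a b = p2
  generalize QF G a d = p3
  generalize QF G b a = p4
  generalize QF G b b = p5
  generalize QF G b d = p6
  revert p1 p2 p3 p4 p5 p6
  decide

private lemma tga_assoc (x y z : TGA G) : x * y * z = x * (y * z) := by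
  funext d
  simp only [tmul_def, Finset.sum_mul, Finset.mul_sum]
  rw [Finset.sum_comm]
  refine Finset.sum_congr rfl fun a _ => ?_
  rw [← Equiv.sum_comp (Equiv.addLeft a) (fun c =>
    x a * y (a + c) * sgn (QF G a (a + c)) * z (c + d) * sgn (QF G c (c + d)))]
  refine Finset.sum_congr rfl fun b _ => ?_
  simp only [Equiv.coe_addLeft, pi_add_cancel]
  have hc := cocycle G a b d
  have h2 : a + b + d = b + (a + d) := by rw [add_assoc, add_left_comm]
  rw [h2]
  calc x a * y b * sgn (QF G a b) * z (b + (a + d)) * sgn (QF G (a+b) (b + (a+d)))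
      = x a * y b * z (b + (a + d)) * (sgn (QF G a b) * sgn (QF G (a+b) (a+b+d))) := by
        rw [h2]; ring
    _ = x a * y b * z (b + (a + d)) * (sgn (QF G b (b + (a+d))) * sgn (QF G a (a+d))) := by rw [hc]
    _ = x a * (y b * z (b + (a + d)) * sgn (QF G b (b + (a + d)))) * sgn (QF G a (a + d)) := by ring

private lemma tga_one_mul (x : TGA G) : 1 * x = x := by
  funext d
  rw [tmul_def]
  simp only [tone_def, ite_mul, one_mul, zero_mul, Finset.sum_ite_eq', Finset.mem_univ, if_true]
  simp [QF_zero_left, sgn_zero]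

private lemma tga_mul_one (x : TGA G) : x * 1 = x := by
  funext d
  rw [tmul_def]
  rw [Finset.sum_eq_single d]
  · simp [tone_def, pi_addself, QF_zero_right, sgn_zero]
  · intro a _ ha
    have : ¬ (a + d = 0) := fun h => ha ((pi_add_eq_zero_iff _ _).1 h)
    simp [tone_def, this]
  · intro h; exact absurd (Finset.mem_univ d) h

noncomputable instance : Ring (TGA G) :=
  { (inferInstance : AddCommGroup (TGA G)),
    (inferInstance : Mul (TGA G)), (inferInstance : One (TGA G)) with
    mul_assoc := tga_assoc G
    one_mul := tga_one_mul G
    mul_one := tga_mul_one G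
    left_distrib := fun x y z => by
      funext d
      show ∑ a, x a * (y (a+d) + z (a+d)) * sgn (QF G a (a+d)) = (x*y) d + (x*z) d
      simp [tmul_def, mul_add, add_mul, Finset.sum_add_distrib]
    right_distrib := fun x y z => by
      funext d
      show ∑ a, (x a + y a) * z (a+d) * sgn (QF G a (a+d)) = (x*z) d + (y*z) d
      simp [tmul_def, mul_add, add_mul, Finset.sum_add_distrib]
    zero_mul := fun x => by
      funext d
      show ∑ a, (0:ℂ) * x (a+d) * sgn (QF G a (a+d)) = 0
      simp
    mul_zero := fun x => by
      funext d
      show ∑ a, x a * 0 * sgn (QF G a (a+d)) = 0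
      simp }

lemma tsmul_apply (r : ℂ) (x : TGA G) (d : Fin n → ZMod 2) : (r • x) d = r * x d := rfl

noncomputable instance : Algebra ℂ (TGA G) :=
  Algebra.ofModule
    (fun r x y => by
      funext d
      rw [tsmul_apply, tmul_def, tmul_def, Finset.mul_sum]
      exact Finset.sum_congr rfl fun a _ => by rw [tsmul_apply]; ring)
    (fun r x y => by
      funext d
      rw [tsmul_apply, tmul_def, tmul_def, Finset.mul_sum]
      refine Finset.sum_congr rfl fun a _ => ?_
      rw [tsmul_apply]; ring)

lemma delta_mul_delta (a b : Fin n → ZMod 2) :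
    delta G a * delta G b = sgn (QF G a b) • delta G (a + b) := by
  funext d
  rw [tmul_def]
  have : ∀ c, delta G a c * delta G b (c + d) * sgn (QF G c (c + d)) =
      if c = a then delta G b (c + d) * sgn (QF G c (c + d)) else 0 := by
    intro c; by_cases h : c = a <;> simp [delta, h]
  rw [Finset.sum_congr rfl fun c _ => this c]
  rw [Finset.sum_ite_eq' Finset.univ a _]
  simp only [Finset.mem_univ, if_true, Pi.smul_apply, smul_eq_mul]
  rw [tsmul_apply]
  by_cases h : d = a + b
  · subst h
    simp [delta, pi_add_cancel, mul_comm]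
  · have h2 : ¬ (a + d = b) := fun hh => h (by rw [← hh, pi_add_cancel])
    simp [delta, h2, h]

lemma tadd_apply (x y : TGA G) (d : Fin n → ZMod 2) : (x + y) d = x d + y d := rfl

lemma delta_zero_eq_one : delta G 0 = (1 : TGA G) := rfl

noncomputable def genB (i : Fin n) : TGA G := delta G (Pi.single i 1)

lemma QF_single_single (i j : Fin n) :
    QF G (Pi.single i 1) (Pi.single j 1) = cMat G i j := by
  unfold QF
  rw [Finset.sum_eq_single i]
  · rw [Finset.sum_eq_single j] <;> simp +contextual [Pi.single_apply]
  · intro k _ hk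
    apply Finset.sum_eq_zero
    intro l _
    simp [Pi.single_apply, hk]
  · simp

lemma genB_mul (i j : Fin n) :
    genB G i * genB G j = sgn (cMat G i j) • delta G (Pi.single i 1 + Pi.single j 1) := by
  rw [genB, genB, delta_mul_delta, QF_single_single]

lemma sgn_one : sgn 1 = -1 := by simp [sgn]

lemma genB_sq (i : Fin n) : genB G i * genB G i = -1 := by
  rw [genB_mul, pi_addself, delta_zero_eq_one]
  have h1 : cMat G i i = 1 := if_pos rfl
  rw [h1, sgn_one, neg_one_smul]

lemma genB_anticomm {i j : Fin n} (h : G.Adj i j) :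
    genB G i * genB G j = -(genB G j * genB G i) := by
  rw [genB_mul, genB_mul, add_comm (Pi.single j 1)]
  have hne : i ≠ j := h.ne
  have : sgn (cMat G i j) = - sgn (cMat G j i) := by
    rcases lt_trichotomy i j with hlt | heq | hgt
    · have c1 : cMat G i j = 0 := by
        unfold cMat; rw [if_neg hne, if_neg (fun hc => absurd hc.1 (not_lt.2 hlt.le))]
      have c2 : cMat G j i = 1 := by
        unfold cMat; rw [if_neg hne.symm, if_pos ⟨hlt, h.symm⟩]
      rw [c1, c2, sgn_zero, sgn_one]; norm_num
    · exact absurd heq hne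
    · have c1 : cMat G i j = 1 := by
        unfold cMat; rw [if_neg hne, if_pos ⟨hgt, h⟩]
      have c2 : cMat G j i = 0 := by
        unfold cMat; rw [if_neg hne.symm, if_neg (fun hc => absurd hc.1 (not_lt.2 hgt.le))]
      rw [c1, c2, sgn_zero, sgn_one]
  rw [this, neg_smul]

lemma genB_commute {i j : Fin n} (hne : i ≠ j) (h : ¬ G.Adj i j) :
    genB G i * genB G j = genB G j * genB G i := by
  rw [genB_mul, genB_mul, add_comm (Pi.single j 1)]
  have c1 : cMat G i j = 0 := by
    unfold cMat; rw [if_neg hne, if_neg (fun hc => h hc.2)]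
  have c2 : cMat G j i = 0 := by
    unfold cMat; rw [if_neg hne.symm, if_neg (fun hc => h hc.2.symm)]
  rw [c1, c2]

/-! ### The algebra map from the Clifford graph algebra -/

noncomputable def toFree : FreeAlgebra ℂ (Fin n) →ₐ[ℂ] TGA G :=
  FreeAlgebra.lift ℂ (genB G)

lemma toFree_resp : ∀ ⦃x y⦄, CliffordRel G x y → toFree G x = toFree G y := by
  intro x y h
  cases h with
  | sq i =>
      rw [map_mul, map_neg, map_one, toFree, FreeAlgebra.lift_ι_apply]
      exact genB_sq G i
  | anticomm h =>
      rw [map_mul, map_neg, map_mul, toFree, FreeAlgebra.lift_ι_apply,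
        FreeAlgebra.lift_ι_apply]
      exact genB_anticomm G h
  | comm hne h =>
      rw [map_mul, map_mul, toFree, FreeAlgebra.lift_ι_apply, FreeAlgebra.lift_ι_apply]
      exact genB_commute G hne h

noncomputable def Phi : GraphCliffordAlgebra G →ₐ[ℂ] TGA G :=
  RingQuot.liftAlgHom ℂ ⟨toFree G, toFree_resp G⟩

lemma Phi_gen (i : Fin n) : Phi G (gen G i) = genB G i := by
  rw [gen, Phi, RingQuot.liftAlgHom_mkAlgHom_apply, toFree, FreeAlgebra.lift_ι_apply]

/-! ### Relations in the quotient -/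

lemma gen_sq (i : Fin n) : gen G i * gen G i = -1 := by
  have h := RingQuot.mkAlgHom_rel ℂ (CliffordRel.sq (G := G) i)
  rw [map_mul, map_neg, map_one] at h
  exact h

lemma gen_swap {i j : Fin n} (hne : i ≠ j) :
    ∃ c : ℂ, gen G i * gen G j = c • (gen G j * gen G i) := by
  by_cases h : G.Adj i j
  · refine ⟨-1, ?_⟩
    have hr := RingQuot.mkAlgHom_rel ℂ (CliffordRel.anticomm (G := G) h)
    rw [map_mul, map_neg, map_mul] at hr
    simp only [gen]
    rw [hr]
    exact (neg_one_smul ℂ _).symm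
  · refine ⟨1, ?_⟩
    have hr := RingQuot.mkAlgHom_rel ℂ (CliffordRel.comm (G := G) hne h)
    rw [map_mul, map_mul] at hr
    simp only [gen]
    rw [hr, one_smul]

/-! ### Products of generators along lists -/

noncomputable def lprod (l : List (Fin n)) : GraphCliffordAlgebra G :=
  (l.map (gen G)).prod

lemma lprod_nil : lprod G [] = 1 := rfl

lemma lprod_cons (i : Fin n) (l : List (Fin n)) :
    lprod G (i :: l) = gen G i * lprod G l := by
  simp [lprod]

lemma mono_eq_lprod (α : Finset (Fin n)) : mono G α = lprod G (α.sort (· ≤ ·)) := rfl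

lemma key_reduce (l : List (Fin n)) (hl : l.Pairwise (· < ·)) (i : Fin n) :
    ∃ (c : ℂ) (m : List (Fin n)), m.Pairwise (· < ·) ∧ (∀ x ∈ m, x = i ∨ x ∈ l) ∧
      gen G i * lprod G l = c • lprod G m := by
  induction l with
  | nil =>
      refine ⟨1, [i], by simp, by simp, ?_⟩
      rw [lprod_nil, lprod_cons, lprod_nil]
      simp
  | cons j t ih =>
      have hjt : ∀ x ∈ t, j < x := (List.pairwise_cons.1 hl).1
      have ht : t.Pairwise (· < ·) := (List.pairwise_cons.1 hl).2
      rcases lt_trichotomy i j with hlt | heq | hgt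
      · refine ⟨1, i :: j :: t, ?_, ?_, ?_⟩
        · exact List.pairwise_cons.2 ⟨fun x hx => by
            rcases List.mem_cons.1 hx with rfl | hx
            · exact hlt
            · exact hlt.trans (hjt x hx), hl⟩
        · intro x hx
          rcases List.mem_cons.1 hx with rfl | hx
          · exact Or.inl rfl
          · exact Or.inr hx
        · rw [one_smul]
          simp only [lprod_cons, mul_assoc]
      · subst heq
        refine ⟨-1, t, ht, fun x hx => Or.inr (List.mem_cons_of_mem _ hx), ?_⟩
        rw [lprod_cons, ← mul_assoc, gen_sq]
        have h1 : (-1 : ℂ) • lprod G t = -lprod G t := by exact neg_one_smul ℂ (lprod G t)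
        rw [h1]
        exact neg_one_mul (lprod G t)
      · obtain ⟨c1, hc1⟩ := gen_swap G hgt.ne'
        obtain ⟨c2, m, hm, hmem, hprod⟩ := ih ht
        refine ⟨c1 * c2, j :: m, ?_, ?_, ?_⟩
        · refine List.pairwise_cons.2 ⟨fun x hx => ?_, hm⟩
          rcases hmem x hx with rfl | hx'
          · exact hgt
          · exact hjt x hx'
        · intro x hx
          rcases List.mem_cons.1 hx with rfl | hx'
          · exact Or.inr (List.mem_cons_self)
          · rcases hmem x hx' with rfl | hx''
            · exact Or.inl rfl
            · exact Or.inr (List.mem_cons_of_mem _ hx'')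
        · rw [lprod_cons, ← mul_assoc, hc1, smul_mul_assoc, mul_assoc, hprod,
            mul_smul_comm, lprod_cons, smul_smul]

lemma lprod_eq_mono (m : List (Fin n)) (hm : m.Pairwise (· < ·)) :
    lprod G m = mono G m.toFinset := by
  rw [mono_eq_lprod]
  congr 1
  exact ((List.toFinset_sort (· ≤ ·) hm.nodup).2 (hm.imp le_of_lt)).symm

/-! ### Spanning -/

noncomputable def Sspan : Submodule ℂ (GraphCliffordAlgebra G) :=
  Submodule.span ℂ (Set.range (mono G))

lemma gen_mul_mono_mem (i : Fin n) (α : Finset (Fin n)) :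
    gen G i * mono G α ∈ Sspan G := by
  obtain ⟨c, m, hm, _, hp⟩ := key_reduce G (α.sort (· ≤ ·)) (α.sortedLT_sort.pairwise) i
  rw [mono_eq_lprod, hp, lprod_eq_mono G m hm]
  exact Submodule.smul_mem _ _ (Submodule.subset_span ⟨_, rfl⟩)

lemma gen_mul_mem (i : Fin n) {s : GraphCliffordAlgebra G} (hs : s ∈ Sspan G) :
    gen G i * s ∈ Sspan G := by
  induction hs using Submodule.span_induction with
  | mem x hx => obtain ⟨α, rfl⟩ := hx; exact gen_mul_mono_mem G i α
  | zero => rw [mul_zero]; exact Submodule.zero_mem _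
  | add x y hx hy ihx ihy => rw [mul_add]; exact Submodule.add_mem _ ihx ihy
  | smul a x hx ihx => rw [mul_smul_comm]; exact Submodule.smul_mem _ _ ihx

lemma one_mem_Sspan : (1 : GraphCliffordAlgebra G) ∈ Sspan G := by
  have : mono G ∅ = 1 := by rw [mono_eq_lprod, Finset.sort_empty, lprod_nil]
  exact this ▸ Submodule.subset_span ⟨∅, this ▸ rfl⟩

lemma Sspan_eq_top : Sspan G = ⊤ := by
  rw [eq_top_iff]
  rintro q -
  obtain ⟨x, rfl⟩ := RingQuot.mkAlgHom_surjective ℂ (CliffordRel G) q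
  have main : ∀ x : FreeAlgebra ℂ (Fin n),
      (∀ s ∈ Sspan G, RingQuot.mkAlgHom ℂ (CliffordRel G) x * s ∈ Sspan G) := by
    intro x
    induction x using FreeAlgebra.induction with
    | grade0 r =>
        intro s hs
        rw [AlgHom.commutes, Algebra.algebraMap_eq_smul_one, smul_mul_assoc, one_mul]
        exact Submodule.smul_mem _ _ hs
    | grade1 i =>
        intro s hs
        exact gen_mul_mem G i hs
    | mul a b iha ihb =>
        intro s hs
        rw [map_mul, mul_assoc]
        exact iha _ (ihb s hs)
    | add a b iha ihb =>
        intro s hs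
        rw [map_add, add_mul]
        exact Submodule.add_mem _ (iha s hs) (ihb s hs)
  have := main x 1 (one_mem_Sspan G)
  rwa [mul_one] at this

/-! ### `Phi` on monomials -/

noncomputable def indSum (l : List (Fin n)) : Fin n → ZMod 2 :=
  (l.map (fun i => Pi.single i (1 : ZMod 2))).sum

lemma indSum_nil : indSum ([] : List (Fin n)) = 0 := rfl

lemma indSum_cons (i : Fin n) (t : List (Fin n)) :
    indSum (i :: t) = Pi.single i 1 + indSum t := by
  simp [indSum]

lemma indSum_apply_not_mem {t : List (Fin n)} {l : Fin n} (h : l ∉ t) :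
    indSum t l = 0 := by
  induction t with
  | nil => rfl
  | cons x t ih =>
      rw [indSum_cons]
      have hxl : x ≠ l := fun hh => h (hh ▸ List.mem_cons_self)
      have hz : Pi.single (M := fun _ => ZMod 2) x 1 l = 0 := by
        rw [Pi.single_eq_of_ne (Ne.symm hxl)]
      rw [Pi.add_apply, hz, zero_add]
      exact ih (fun hh => h (List.mem_cons_of_mem _ hh))

lemma indSum_apply_mem {t : List (Fin n)} (hnd : t.Nodup) {l : Fin n} (h : l ∈ t) :
    indSum t l = 1 := by
  induction t with
  | nil => exact absurd h List.not_mem_nil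
  | cons x t ih =>
      rw [indSum_cons, Pi.add_apply]
      rcases List.mem_cons.1 h with rfl | h'
      · rw [Pi.single_eq_same, indSum_apply_not_mem (List.nodup_cons.1 hnd).1, add_zero]
      · have hxl : x ≠ l := fun hh => (List.nodup_cons.1 hnd).1 (hh ▸ h')
        rw [Pi.single_eq_of_ne (Ne.symm hxl), zero_add]
        exact ih (List.nodup_cons.1 hnd).2 h'

lemma QF_single_indSum {i : Fin n} {t : List (Fin n)} (h : ∀ x ∈ t, i < x) :
    QF G (Pi.single i 1) (indSum t) = 0 := by
  unfold QF
  rw [Finset.sum_eq_single i]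
  · apply Finset.sum_eq_zero
    intro l _
    by_cases hl : i < l
    · have : cMat G i l = 0 := by
        unfold cMat
        rw [if_neg hl.ne, if_neg (fun hc => absurd hc.1 (not_lt.2 hl.le))]
      rw [this, mul_zero, zero_mul]
    · have : indSum t l = 0 :=
        indSum_apply_not_mem (fun hm => hl (h l hm))
      rw [this, mul_zero]
  · intro k _ hk
    apply Finset.sum_eq_zero
    intro l _
    rw [Pi.single_eq_of_ne hk, zero_mul, zero_mul]
  · simp

lemma Phi_lprod (l : List (Fin n)) (hl : l.Pairwise (· < ·)) :
    Phi G (lprod G l) = delta G (indSum l) := by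
  induction l with
  | nil => rw [lprod_nil, map_one, indSum_nil, delta_zero_eq_one]
  | cons i t ih =>
      have hit : ∀ x ∈ t, i < x := (List.pairwise_cons.1 hl).1
      have ht : t.Pairwise (· < ·) := (List.pairwise_cons.1 hl).2
      rw [lprod_cons, map_mul, Phi_gen, ih ht, genB, delta_mul_delta,
        QF_single_indSum G hit, sgn_zero, one_smul, indSum_cons]

noncomputable def indF (α : Finset (Fin n)) : Fin n → ZMod 2 := indSum (α.sort (· ≤ ·))

lemma Phi_mono (α : Finset (Fin n)) : Phi G (mono G α) = delta G (indF α) := by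
  rw [mono_eq_lprod]
  exact Phi_lprod G _ α.sortedLT_sort.pairwise

lemma indF_apply (α : Finset (Fin n)) (l : Fin n) :
    indF α l = if l ∈ α then 1 else 0 := by
  by_cases h : l ∈ α
  · rw [if_pos h]
    exact indSum_apply_mem (α.sort_nodup _) ((Finset.mem_sort _).2 h)
  · rw [if_neg h]
    exact indSum_apply_not_mem (fun hm => h ((Finset.mem_sort _).1 hm))

noncomputable def aSet (a : Fin n → ZMod 2) : Finset (Fin n) :=
  Finset.univ.filter (fun i => a i = 1)

lemma indF_aSet (a : Fin n → ZMod 2) : indF (aSet a) = a := by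
  funext l
  rw [indF_apply]
  by_cases h : a l = 1
  · rw [if_pos (by simp [aSet, h]), h]
  · rw [if_neg (by simp [aSet, h])]
    rcases z2_cases (a l) with h0 | h1
    · rw [h0]
    · exact absurd h1 h

lemma aSet_indF (α : Finset (Fin n)) : aSet (indF α) = α := by
  ext l
  simp only [aSet, Finset.mem_filter, Finset.mem_univ, true_and, indF_apply]
  by_cases h : l ∈ α <;> simp [h]

/-! ### The inverse linear map -/

noncomputable def Psi : TGA G →ₗ[ℂ] GraphCliffordAlgebra G where
  toFun x := ∑ a, x a • mono G (aSet a)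
  map_add' x y := by
    simp only [tadd_apply, add_smul]
    rw [Finset.sum_add_distrib]
  map_smul' r x := by
    simp only [tsmul_apply, RingHom.id_apply, Finset.smul_sum, smul_smul]

lemma Psi_delta (b : Fin n → ZMod 2) : Psi G (delta G b) = mono G (aSet b) := by
  show (∑ a, delta G b a • mono G (aSet a)) = mono G (aSet b)
  rw [Finset.sum_eq_single b]
  · rw [show delta G b b = 1 from if_pos rfl, one_smul]
  · intro a _ ha
    rw [show delta G b a = 0 from if_neg ha, zero_smul]
  · simp

lemma Phi_Psi (x : TGA G) : Phi G (Psi G x) = x := by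
  show Phi G (∑ a, x a • mono G (aSet a)) = x
  rw [map_sum]
  have h1 : ∀ a, Phi G (x a • mono G (aSet a)) = x a • delta G a := by
    intro a
    rw [map_smul, Phi_mono, indF_aSet]
  rw [Finset.sum_congr rfl fun a _ => h1 a]
  funext d
  have h2 : (∑ a, x a • delta G a) d = ∑ a, (x a • delta G a) d :=
    Finset.sum_apply d Finset.univ _
  rw [h2]
  rw [Finset.sum_eq_single d]
  · rw [tsmul_apply, show delta G d d = 1 from if_pos rfl, mul_one]
  · intro a _ ha
    rw [tsmul_apply, show delta G a d = 0 from if_neg ha.symm, mul_zero]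
  · simp

lemma Psi_Phi (q : GraphCliffordAlgebra G) : Psi G (Phi G q) = q := by
  have hq : q ∈ Sspan G := by rw [Sspan_eq_top]; trivial
  induction hq using Submodule.span_induction with
  | mem x hx =>
      obtain ⟨α, rfl⟩ := hx
      rw [Phi_mono, Psi_delta, aSet_indF]
  | zero => rw [map_zero, map_zero]
  | add x y hx hy ihx ihy => rw [map_add, map_add, ihx, ihy]
  | smul a x hx ihx => rw [map_smul, map_smul, ihx]

noncomputable def E : GraphCliffordAlgebra G ≃ₐ[ℂ] TGA G :=
  AlgEquiv.ofBijective (Phi G)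
    ⟨Function.LeftInverse.injective (Psi_Phi G),
     fun x => ⟨Psi G x, Phi_Psi G x⟩⟩

/-! ### The center of `TGA` -/

noncomputable def MZ : Matrix (Fin n) (Fin n) (ZMod 2) :=
  (adjMatZ G).map (Int.cast : ℤ → ZMod 2)

lemma cMat_symm_add (i j : Fin n) : cMat G i j + cMat G j i = MZ G i j := by
  have hM : MZ G i j = if G.Adj i j then 1 else 0 := by
    simp only [MZ, adjMatZ, Matrix.map_apply]
    by_cases h : G.Adj i j <;> simp [h]
  rcases lt_trichotomy i j with hlt | heq | hgt
  · have c1 : cMat G i j = 0 := by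
      unfold cMat; rw [if_neg hlt.ne, if_neg (fun hc => absurd hc.1 (not_lt.2 hlt.le))]
    by_cases h : G.Adj i j
    · have c2 : cMat G j i = 1 := by
        unfold cMat; rw [if_neg hlt.ne', if_pos ⟨hlt, h.symm⟩]
      rw [c1, c2, hM, if_pos h, zero_add]
    · have c2 : cMat G j i = 0 := by
        unfold cMat; rw [if_neg hlt.ne', if_neg (fun hc => h hc.2.symm)]
      rw [c1, c2, hM, if_neg h, zero_add]
  · subst heq
    have : cMat G i i = 1 := if_pos rfl
    rw [this, hM, if_neg (G.loopless.irrefl i)]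
    decide
  · have c2 : cMat G j i = 0 := by
      unfold cMat; rw [if_neg hgt.ne, if_neg (fun hc => absurd hc.1 (not_lt.2 hgt.le))]
    by_cases h : G.Adj i j
    · have c1 : cMat G i j = 1 := by
        unfold cMat; rw [if_neg hgt.ne', if_pos ⟨hgt, h⟩]
      rw [c1, c2, hM, if_pos h, add_zero]
    · have c1 : cMat G i j = 0 := by
        unfold cMat; rw [if_neg hgt.ne', if_neg (fun hc => h hc.2)]
      rw [c1, c2, hM, if_neg h, add_zero]

lemma QF_swap_add (a e : Fin n → ZMod 2) :
    QF G a e + QF G e a = ∑ i, a i * (MZ G).mulVec e i := by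
  have h1 : QF G e a = ∑ i, ∑ j, a i * cMat G j i * e j := by
    rw [QF, Finset.sum_comm]
    exact Finset.sum_congr rfl fun i _ => Finset.sum_congr rfl fun j _ => by ring
  rw [QF, h1, ← Finset.sum_add_distrib]
  refine Finset.sum_congr rfl fun i _ => ?_
  rw [← Finset.sum_add_distrib]
  have hmv : (MZ G).mulVec e i = ∑ j, MZ G i j * e j := by
    rw [Matrix.mulVec, dotProduct]
  rw [hmv, Finset.mul_sum]
  refine Finset.sum_congr rfl fun j _ => ?_
  have hcm := cMat_symm_add G i j
  calc a i * cMat G i j * e j + a i * cMat G j i * e j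
      = a i * ((cMat G i j + cMat G j i) * e j) := by ring
    _ = a i * (MZ G i j * e j) := by rw [hcm]

lemma delta_mul_apply (a : Fin n → ZMod 2) (x : TGA G) (d : Fin n → ZMod 2) :
    (delta G a * x) d = sgn (QF G a (a + d)) * x (a + d) := by
  rw [tmul_def, Finset.sum_eq_single a]
  · rw [show delta G a a = 1 from if_pos rfl, one_mul]; ring
  · intro c _ hc
    rw [show delta G a c = 0 from if_neg hc, zero_mul, zero_mul]
  · simp

lemma pi_add_cancel_right (a d : Fin n → ZMod 2) : (a + d) + d = a := by
  rw [add_assoc, pi_addself, add_zero]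

lemma mul_delta_apply (x : TGA G) (a d : Fin n → ZMod 2) :
    (x * delta G a) d = x (a + d) * sgn (QF G (a + d) a) := by
  rw [tmul_def, Finset.sum_eq_single (a + d)]
  · rw [pi_add_cancel_right, show delta G a a = 1 from if_pos rfl, mul_one]
  · intro c _ hc
    have : c + d ≠ a := fun hh => hc (by rw [← hh, pi_add_cancel_right])
    rw [show delta G a (c + d) = 0 from if_neg this, mul_zero, zero_mul]
  · simp

lemma z2_eq_of_add_eq_zero : ∀ p q : ZMod 2, p + q = 0 → p = q := by decide

lemma z2_add_eq_zero_of_eq : ∀ p q : ZMod 2, p = q → p + q = 0 := by decide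

lemma single_dot (i : Fin n) (v : Fin n → ZMod 2) :
    ∑ k, Pi.single (M := fun _ => ZMod 2) i 1 k * v k = v i := by
  rw [Finset.sum_eq_single i]
  · rw [Pi.single_eq_same, one_mul]
  · intro k _ hk
    rw [Pi.single_eq_of_ne hk, zero_mul]
  · simp

lemma center_iff (x : TGA G) :
    x ∈ Subalgebra.center ℂ (TGA G) ↔ ∀ e, (MZ G).mulVec e ≠ 0 → x e = 0 := by
  constructor
  · intro hx e he
    obtain ⟨i, hi⟩ := Function.ne_iff.1 he
    by_contra hxe
    set a := Pi.single (M := fun _ => ZMod 2) i 1 with ha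
    have hc := (Subalgebra.mem_center_iff.1 hx) (delta G a)
    have hd := congrFun hc (a + e)
    rw [delta_mul_apply, mul_delta_apply, pi_add_cancel] at hd
    have hsgn : sgn (QF G a e) = sgn (QF G e a) :=
      mul_right_cancel₀ hxe (hd.trans (mul_comm _ _))
    have hQ : QF G a e + QF G e a = 0 := z2_add_eq_zero_of_eq _ _ (sgn_inj hsgn)
    rw [QF_swap_add, ha, single_dot] at hQ
    exact hi (by simpa using hQ)
  · intro h
    rw [Subalgebra.mem_center_iff]
    intro y
    funext d
    rw [tmul_def, tmul_def]
    rw [← Equiv.sum_comp (Equiv.addRight d) (fun c => x c * y (c + d) * sgn (QF G c (c + d)))]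
    refine Finset.sum_congr rfl fun c _ => ?_
    simp only [Equiv.coe_addRight, pi_add_cancel_right]
    by_cases hx0 : x (c + d) = 0
    · rw [hx0]; ring
    · have hker : (MZ G).mulVec (c + d) = 0 := by
        by_contra hk
        exact hx0 (h _ hk)
      have hQ : QF G c (c + d) = QF G (c + d) c := by
        apply z2_eq_of_add_eq_zero
        rw [QF_swap_add, hker]
        simp
      rw [hQ]; ring

noncomputable def centerEquiv :
    Subalgebra.center ℂ (TGA G) ≃ₗ[ℂ] ({e : Fin n → ZMod 2 // (MZ G).mulVec e = 0} → ℂ) where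
  toFun x := fun k => (x : TGA G) k.1
  map_add' x y := rfl
  map_smul' r x := rfl
  invFun y := ⟨fun e => if h : (MZ G).mulVec e = 0 then y ⟨e, h⟩ else 0,
    (center_iff G _).2 (fun e he => dif_neg he)⟩
  left_inv x := by
    apply Subtype.ext
    funext e
    by_cases h : (MZ G).mulVec e = 0
    · exact dif_pos h
    · exact (dif_neg h).trans ((center_iff G _).1 x.2 e h).symm
  right_inv y := by
    funext k
    exact (dif_pos k.2).trans (congrArg y (Subtype.ext rfl))

noncomputable def qCenterEquiv :
    Subalgebra.center ℂ (GraphCliffordAlgebra G) ≃ₗ[ℂ] Subalgebra.center ℂ (TGA G) where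
  toFun x := ⟨E G x.1, by
    rw [Subalgebra.mem_center_iff]
    intro b
    have hb : b = E G ((E G).symm b) := ((E G).apply_symm_apply b).symm
    rw [hb, ← map_mul, ← map_mul,
      (Subalgebra.mem_center_iff.1 x.2) ((E G).symm b)]⟩
  map_add' x y := by apply Subtype.ext; simp [map_add]
  map_smul' r x := by apply Subtype.ext; simp [map_smul]
  invFun y := ⟨(E G).symm y.1, by
    rw [Subalgebra.mem_center_iff]
    intro b
    have hb : b = (E G).symm (E G b) := ((E G).symm_apply_apply b).symm
    rw [hb, ← map_mul, ← map_mul,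
      (Subalgebra.mem_center_iff.1 y.2) (E G b)]⟩
  left_inv x := by apply Subtype.ext; simp
  right_inv y := by apply Subtype.ext; simp

end CGA

/-- The center of the Clifford graph algebra of `G` is 1-dimensional iff the determinant of
the (integer) adjacency matrix of `G` is odd. -/
theorem center_one_dim_iff_odd_det (n : ℕ) (G : SimpleGraph (Fin n)) :
    Module.finrank ℂ (Subalgebra.center ℂ (GraphCliffordAlgebra G)) = 1 ↔
      Odd (adjMatZ G).det := by
  classical
  haveI : Fact (Nat.Prime 2) := ⟨Nat.prime_two⟩
  have h1 : Module.finrank ℂ (Subalgebra.center ℂ (GraphCliffordAlgebra G)) =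
      Fintype.card {e : Fin n → ZMod 2 // (CGA.MZ G).mulVec e = 0} := by
    rw [(CGA.qCenterEquiv G).finrank_eq, (CGA.centerEquiv G).finrank_eq,
      Module.finrank_pi]
  rw [h1]
  have hdet : (CGA.MZ G).det = ((adjMatZ G).det : ZMod 2) := by
    have hmap := RingHom.map_det (Int.castRingHom (ZMod 2)) (adjMatZ G)
    rw [RingHom.mapMatrix_apply] at hmap
    rw [CGA.MZ, show (Int.cast : ℤ → ZMod 2) = ⇑(Int.castRingHom (ZMod 2)) from rfl, ← hmap]
  have heven : Even (adjMatZ G).det ↔ (((2:ℕ)) : ℤ) ∣ (adjMatZ G).det :=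
    ⟨fun ⟨k, hk⟩ => ⟨k, by omega⟩, fun ⟨k, hk⟩ => ⟨k, by omega⟩⟩
  have h2 : (((adjMatZ G).det : ℤ) : ZMod 2) = 0 ↔ (((2:ℕ)) : ℤ) ∣ (adjMatZ G).det :=
    ZMod.intCast_zmod_eq_zero_iff_dvd _ 2
  have hodd : Odd (adjMatZ G).det ↔ (CGA.MZ G).det ≠ 0 := by
    rw [hdet, ← Int.not_even_iff_odd, heven, ← h2]
  rw [hodd]
  constructor
  · intro hcard hdet0
    obtain ⟨v, hv, hvm⟩ := (Matrix.exists_mulVec_eq_zero_iff.2 hdet0)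
    obtain ⟨x, hx⟩ := Fintype.card_eq_one_iff.1 hcard
    have h0 : (⟨0, Matrix.mulVec_zero _⟩ : {e : Fin n → ZMod 2 // (CGA.MZ G).mulVec e = 0}) = x :=
      hx _
    have hv' : (⟨v, hvm⟩ : {e : Fin n → ZMod 2 // (CGA.MZ G).mulVec e = 0}) = x := hx _
    exact hv (Subtype.ext_iff.1 (hv'.trans h0.symm))
  · intro hdet0
    refine Fintype.card_eq_one_iff.2 ⟨⟨0, Matrix.mulVec_zero _⟩, fun y => Subtype.ext ?_⟩
    by_contra hy
    exact hdet0 (Matrix.exists_mulVec_eq_zero_iff.1 ⟨y.1, hy, y.2⟩)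
end
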